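/- arXiv:math/0212163 — 7 statements merged into one kernel-verified Lean document; each statement's English description precedes it below -/
import Mathlib

section
/- The number of permutations of {1,...,n} that avoid the pattern 321 equals the n-th Catalan number. -/
/-- A permutation of `{1,...,n}` (modeled as `Fin n`) avoids the pattern 321 if there
are no indices `i < j < k` with `π i > π j > π k`. -/
def Avoids321 {n : ℕ} (π : Equiv.Perm (Fin n)) : Prop :=
  ¬ ∃ i j k : Fin n, i < j ∧ j < k ∧ π k < π j ∧ π j < π i

/-!
A list avoids 321 iff, after each entry, the later entries smaller than it increase. So in a
321-avoiding arrangement of `0, …, n-1` the entries that are not new maxima fill, in increasing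
order, the values left free by the maxima, and the arrangement is determined by its running
maxima. Conversely, filling the free values in this way realizes every admissible sequence of
running maxima. Writing `b_i` for one more than the maximum of the first `i` entries, these
sequences are the weakly increasing `b_1 ≤ ⋯ ≤ b_n` with `i < b_i ≤ n` (pigeonhole), and
`U^(b_1 - b_0) D ⋯ U^(b_n - b_(n-1)) D` (with `b_0 = 0`) turns them bijectively into the Dyck
words of semilength `n`.
-/

open List DyckStep

def List.Avoids321 (l : List ℕ) : Prop :=
  ∀ a b c, [a, b, c] <+ l → ¬ (c < b ∧ b < a)

theorem List.Avoids321.sublist {l l' : List ℕ} (h : l.Avoids321) (hs : l' <+ l) :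
    l'.Avoids321 :=
  fun a b c habc => h a b c (habc.trans hs)

theorem List.avoids321_cons {a : ℕ} {t : List ℕ} :
    (a :: t).Avoids321 ↔ (t.filter (· < a)).Pairwise (· ≤ ·) ∧ t.Avoids321 := by
  rw [pairwise_filter, pairwise_iff_forall_sublist]
  simp only [List.Avoids321, sublist_cons_iff, decide_eq_true_eq]
  constructor
  · intro h
    refine ⟨fun {b c} hbc hb _ => not_lt.1 fun hcb => ?_, fun x y z hs => h x y z (.inl hs)⟩
    exact h a b c (.inr ⟨_, rfl, hbc⟩) ⟨hcb, hb⟩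
  · rintro ⟨hsorted, havoid⟩ x y z (hs | ⟨r, hr, hs⟩)
    · exact havoid x y z hs
    · obtain ⟨rfl, rfl⟩ := List.cons_eq_cons.1 hr
      rintro ⟨hzy, hya⟩
      exact absurd (hsorted hs hya (hzy.trans hya)) (not_le.2 hzy)

theorem List.Nodup.length_le_of_forall_lt {l : List ℕ} {b : ℕ} (hl : l.Nodup)
    (h : ∀ x ∈ l, x < b) : l.length ≤ b := by
  simpa using (subperm_of_subset hl fun x hx => mem_range.2 (h x hx)).length_le (l₂ := range b)

theorem List.filter_lt_filter_lt {k m : ℕ} (hkm : k ≤ m) (l : List ℕ) :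
    (l.filter (· < m)).filter (· < k) = l.filter (· < k) := by
  rw [filter_filter]
  refine filter_congr fun x _ => ?_
  by_cases hx : x < k
  · simp [hx, hx.trans_le hkm]
  · simp [hx]

def recordBounds : ℕ → List ℕ → List ℕ
  | _, [] => []
  | m, a :: l => max m (a + 1) :: recordBounds (max m (a + 1)) l

/-- `M` can continue the record bounds of an arrangement of `range n` whose first `d` entries
have bound `m`. -/
def IsRecordBounds (n : ℕ) : ℕ → ℕ → List ℕ → Prop
  | d, m, [] => d = n ∧ m = n
  | d, m, r :: M => m ≤ r ∧ d < r ∧ IsRecordBounds n (d + 1) r M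

namespace IsRecordBounds

variable {n d m : ℕ} {M : List ℕ}

theorem le (h : IsRecordBounds n d m M) : m ≤ n := by
  induction M generalizing d m with
  | nil => exact h.2.le
  | cons r M ih => exact h.1.trans (ih h.2.2)

theorem add_length (h : IsRecordBounds n d m M) : d + M.length = n := by
  induction M generalizing d m with
  | nil => exact h.1
  | cons r M ih => have := ih h.2.2; simp only [length_cons]; omega

theorem isChain (h : IsRecordBounds n d m M) : (m :: M).IsChain (· ≤ ·) := by
  induction M generalizing d m with
  | nil => exact isChain_singleton m
  | cons r M ih => exact isChain_cons_cons.2 ⟨h.1, ih h.2.2⟩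

theorem of_succ (hdm : d ≤ m) (h : IsRecordBounds n d (m + 1) M) : IsRecordBounds n d m M := by
  cases M with
  | nil => exact absurd h (by simp only [IsRecordBounds]; omega)
  | cons r M => exact ⟨by have := h.1; omega, h.2⟩

end IsRecordBounds

theorem isRecordBounds_recordBounds {n m : ℕ} {p l : List ℕ} (hnd : (p ++ l).Nodup)
    (hp : ∀ x ∈ p, x < m) (hmn : m ≤ n) (hl : ∀ x ∈ l, x < n)
    (hlen : p.length + l.length = n) :
    IsRecordBounds n p.length m (recordBounds m l) := by
  induction l generalizing p m with
  | nil =>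
    have := (by simpa using hnd : p.Nodup).length_le_of_forall_lt hp
    exact ⟨by simpa using hlen, by simp only [length_nil, add_zero] at hlen; omega⟩
  | cons a l ih =>
    have hp' : ∀ x ∈ p ++ [a], x < max m (a + 1) := by
      simp only [mem_append, mem_singleton]
      rintro x (hx | rfl)
      · exact lt_max_of_lt_left (hp x hx)
      · exact lt_max_of_lt_right (Nat.lt_succ_self x)
    have hnd' : (p ++ [a] ++ l).Nodup := by simpa using hnd
    have hpigeon := (hnd'.sublist (sublist_append_left _ _)).length_le_of_forall_lt hp'
    refine ⟨le_max_left _ _, by simpa using hpigeon, ?_⟩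
    have hlen' : (p ++ [a]).length + l.length = n := by
      simp only [length_cons, length_append, length_nil, zero_add] at hlen ⊢; omega
    simpa using ih hnd' hp' (max_le hmn (hl a mem_cons_self))
      (fun x hx => hl x (mem_cons_of_mem a hx)) hlen'

/-- The inverse of `recordBounds` on 321-avoiding lists; `q` holds, increasingly, the values below
the current bound `m` not placed yet. -/
def ofRecordBounds : ℕ → List ℕ → List ℕ → List ℕ
  | _, _, [] => []
  | m, q, r :: M =>
    if m < r then (r - 1) :: ofRecordBounds r (q ++ range' m (r - 1 - m)) M
    else q.headI :: ofRecordBounds m q.tail M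

section OfRecordBounds

variable {n d m : ℕ} {q M : List ℕ}

theorem forall_lt_of_mem_append_range' {r : ℕ} (hqm : ∀ x ∈ q, x < m) (hmr : m < r) :
    ∀ x ∈ q ++ range' m (r - 1 - m), x < r := by
  intro x hx
  rcases mem_append.1 hx with hx | hx
  · exact (hqm x hx).trans hmr
  · rw [mem_range'_1] at hx; omega

theorem ofRecordBounds_perm (hM : IsRecordBounds n d m M) (hq : q.length + d = m) :
    ofRecordBounds m q M ~ q ++ range' m (n - m) := by
  induction M generalizing d m q with
  | nil =>
    obtain ⟨rfl, rfl⟩ := hM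
    rw [length_eq_zero_iff.1 (by omega : q.length = 0)]
    simp [ofRecordBounds]
  | cons r M ih =>
    obtain ⟨hmr, hdr, hM⟩ := hM
    by_cases hrec : m < r
    · have hq' : (q ++ range' m (r - 1 - m)).length + (d + 1) = r := by
        simp only [length_append, length_range']; omega
      have hrn := hM.le
      have hsplit : range' m (n - m) = range' m (r - 1 - m) ++ (r - 1) :: range' r (n - r) := by
        have := range'_append (s := m) (m := r - 1 - m) (n := n - r + 1) (step := 1)
        rw [show m + 1 * (r - 1 - m) = r - 1 by omega,
          show r - 1 - m + (n - r + 1) = n - m by omega, range'_succ,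
          show r - 1 + 1 = r by omega] at this
        exact this.symm
      rw [ofRecordBounds, if_pos hrec, hsplit, ← append_assoc]
      exact ((ih hM hq').cons _).trans perm_middle.symm
    · obtain rfl : m = r := by omega
      obtain ⟨h, q, rfl⟩ := exists_cons_of_length_pos (by omega : 0 < q.length)
      have hq' : q.length + (d + 1) = m := by simp only [length_cons] at hq; omega
      rw [ofRecordBounds, if_neg hrec]
      exact (ih hM hq').cons h

theorem recordBounds_ofRecordBounds (hM : IsRecordBounds n d m M) (hq : q.length + d = m)
    (hqm : ∀ x ∈ q, x < m) : recordBounds m (ofRecordBounds m q M) = M := by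
  induction M generalizing d m q with
  | nil => rfl
  | cons r M ih =>
    obtain ⟨hmr, hdr, hM⟩ := hM
    by_cases hrec : m < r
    · have hq' : (q ++ range' m (r - 1 - m)).length + (d + 1) = r := by
        simp only [length_append, length_range']; omega
      rw [ofRecordBounds, if_pos hrec, recordBounds, show max m (r - 1 + 1) = r by omega,
        ih hM hq' (forall_lt_of_mem_append_range' hqm hrec)]
    · obtain rfl : m = r := by omega
      obtain ⟨h, q, rfl⟩ := exists_cons_of_length_pos (by omega : 0 < q.length)
      have hq' : q.length + (d + 1) = m := by simp only [length_cons] at hq; omega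
      rw [ofRecordBounds, if_neg hrec, recordBounds, headI_cons, tail_cons,
        max_eq_left (hqm h mem_cons_self), ih hM hq' fun x hx => hqm x (mem_cons_of_mem h hx)]

theorem filter_lt_ofRecordBounds (hM : IsRecordBounds n d m M) (hq : q.length + d = m)
    (hqm : ∀ x ∈ q, x < m) : (ofRecordBounds m q M).filter (· < m) = q := by
  induction M generalizing d m q with
  | nil =>
    obtain ⟨rfl, rfl⟩ := hM
    rw [length_eq_zero_iff.1 (by omega : q.length = 0)]
    rfl
  | cons r M ih =>
    obtain ⟨hmr, hdr, hM⟩ := hM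
    by_cases hrec : m < r
    · have hq' : (q ++ range' m (r - 1 - m)).length + (d + 1) = r := by
        simp only [length_append, length_range']; omega
      rw [ofRecordBounds, if_pos hrec,
        filter_cons_of_neg (by simpa using Nat.le_sub_one_of_lt hrec), ← filter_lt_filter_lt hmr,
        ih hM hq' (forall_lt_of_mem_append_range' hqm hrec),
        filter_append, filter_eq_self.2 (by simpa using hqm),
        filter_eq_nil_iff.2 fun x hx => by simp [(mem_range'_1.1 hx).1], append_nil]
    · obtain rfl : m = r := by omega
      obtain ⟨h, q, rfl⟩ := exists_cons_of_length_pos (by omega : 0 < q.length)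
      have hq' : q.length + (d + 1) = m := by simp only [length_cons] at hq; omega
      rw [ofRecordBounds, if_neg hrec, headI_cons, tail_cons,
        filter_cons_of_pos (by simpa using hqm h mem_cons_self),
        ih hM hq' fun x hx => hqm x (mem_cons_of_mem h hx)]

theorem avoids321_ofRecordBounds (hM : IsRecordBounds n d m M) (hq : q.length + d = m)
    (hqm : ∀ x ∈ q, x < m) (hqs : q.Pairwise (· < ·)) : (ofRecordBounds m q M).Avoids321 := by
  induction M generalizing d m q with
  | nil => intro a b c h; simp [ofRecordBounds] at h
  | cons r M ih =>
    obtain ⟨hmr, hdr, hM⟩ := hM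
    by_cases hrec : m < r
    · have hq' : (q ++ range' m (r - 1 - m)).length + (d + 1) = r := by
        simp only [length_append, length_range']; omega
      have hqm' := forall_lt_of_mem_append_range' hqm hrec
      have hqs' : (q ++ range' m (r - 1 - m)).Pairwise (· < ·) :=
        pairwise_append.2 ⟨hqs, pairwise_lt_range', fun x hx y hy =>
          (hqm x hx).trans_le (mem_range'_1.1 hy).1⟩
      rw [ofRecordBounds, if_pos hrec, avoids321_cons, ← filter_lt_filter_lt (Nat.sub_le r 1),
        filter_lt_ofRecordBounds hM hq' hqm']
      exact ⟨(hqs'.filter _).imp le_of_lt, ih hM hq' hqm' hqs'⟩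
    · obtain rfl : m = r := by omega
      obtain ⟨h, q, rfl⟩ := exists_cons_of_length_pos (by omega : 0 < q.length)
      have hq' : q.length + (d + 1) = m := by simp only [length_cons] at hq; omega
      have hqm' : ∀ x ∈ q, x < m := fun x hx => hqm x (mem_cons_of_mem h hx)
      rw [ofRecordBounds, if_neg hrec, headI_cons, tail_cons, avoids321_cons,
        ← filter_lt_filter_lt (hqm h mem_cons_self).le, filter_lt_ofRecordBounds hM hq' hqm',
        filter_eq_nil_iff.2 fun x hx => by simpa using ((pairwise_cons.1 hqs).1 x hx).le]
      exact ⟨Pairwise.nil, ih hM hq' hqm' (pairwise_cons.1 hqs).2⟩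

end OfRecordBounds

theorem List.Avoids321.filter_lt_succ_eq_append {a m : ℕ} {t : List ℕ}
    (hav : (a :: t).Avoids321) (hnd : (a :: t).Nodup) (hma : m ≤ a)
    (hcl : ∀ y, m ≤ y → y < a → y ∈ t) :
    t.filter (· < a + 1) = t.filter (· < m) ++ range' m (a - m) := by
  obtain ⟨hat, hnd⟩ := nodup_cons.1 hnd
  -- The entries of `t` below `a` increase, so both sides are sorted with the same elements.
  have hsorted : (t.filter (· < a)).Pairwise (· < ·) :=
    ((avoids321_cons.1 hav).1.and (hnd.filter _)).imp fun h => lt_of_le_of_ne h.1 h.2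
  have hfa : t.filter (· < a + 1) = t.filter (· < a) :=
    filter_congr fun x hx => by
      have : x ≠ a := fun h => hat (h ▸ hx)
      simp only [decide_eq_decide]; omega
  rw [hfa]
  refine hsorted.eq_of_mem_iff (pairwise_append.2 ⟨?_, pairwise_lt_range', fun x hx y hy => ?_⟩)
    fun x => ?_
  · rw [← filter_lt_filter_lt hma]; exact hsorted.filter _
  · exact (of_decide_eq_true (mem_filter.1 hx).2).trans_le (mem_range'_1.1 hy).1
  · simp only [mem_filter, mem_append, mem_range'_1, decide_eq_true_eq]
    constructor
    · rintro ⟨hx, hxa⟩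
      by_cases hxm : x < m
      · exact .inl ⟨hx, hxm⟩
      · exact .inr ⟨by omega, by omega⟩
    · rintro (⟨hx, hxm⟩ | ⟨hmx, hxa⟩)
      · exact ⟨hx, by omega⟩
      · exact ⟨hcl x hmx (by omega), by omega⟩

theorem ofRecordBounds_recordBounds {m : ℕ} {l : List ℕ} (hav : l.Avoids321) (hnd : l.Nodup)
    (hcl : ∀ x ∈ l, ∀ y, m ≤ y → y ≤ x → y ∈ l) :
    ofRecordBounds m (l.filter (· < m)) (recordBounds m l) = l := by
  induction l generalizing m with
  | nil => rfl
  | cons a t ih =>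
    have ih' (k : ℕ) (hmk : m ≤ k) (hak : a < k) :=
      ih (m := k) (hav.sublist (sublist_cons_self a t)) (nodup_cons.1 hnd).2 fun x hx y hky hyx =>
        (mem_cons.1 (hcl x (mem_cons_of_mem a hx) y (hmk.trans hky) hyx)).resolve_left (by omega)
    by_cases ham : a < m
    · rw [recordBounds, max_eq_left ham, filter_cons_of_pos (by simpa using ham), ofRecordBounds,
        if_neg (lt_irrefl m), headI_cons, tail_cons, ih' m le_rfl ham]
    · rw [recordBounds, max_eq_right (by omega), filter_cons_of_neg (by simpa using ham),
        ofRecordBounds, if_pos (by omega), Nat.add_sub_cancel,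
        ← hav.filter_lt_succ_eq_append hnd (by omega) fun y hmy hya => ?_,
        ih' (a + 1) (by omega) (Nat.lt_succ_self a)]
      exact (mem_cons.1 (hcl a mem_cons_self y hmy hya.le)).resolve_left hya.ne

def dyckStepsOfRecordBounds : ℕ → List ℕ → List DyckStep
  | _, [] => []
  | m, r :: M => replicate (r - m) U ++ D :: dyckStepsOfRecordBounds r M

def recordBoundsOfDyckSteps : ℕ → List DyckStep → List ℕ
  | _, [] => []
  | m, U :: w => recordBoundsOfDyckSteps (m + 1) w
  | m, D :: w => m :: recordBoundsOfDyckSteps m w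

def PrefixBalanced (d m : ℕ) (w : List DyckStep) : Prop :=
  ∀ i, d + (w.take i).count D ≤ m + (w.take i).count U

namespace PrefixBalanced

variable {d m : ℕ} {w : List DyckStep}

theorem le (h : PrefixBalanced d m w) : d ≤ m := by simpa using h 0

theorem cons_U_iff : PrefixBalanced d m (U :: w) ↔ d ≤ m ∧ PrefixBalanced d (m + 1) w := by
  refine ⟨fun h => ⟨h.le, fun i => ?_⟩, fun ⟨hdm, h⟩ i => ?_⟩
  · simpa [count_cons, add_assoc, add_comm 1] using h (i + 1)
  · cases i with
    | zero => simpa using hdm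
    | succ i => simpa [count_cons, add_assoc, add_comm 1] using h i

theorem cons_D_iff : PrefixBalanced d m (D :: w) ↔ PrefixBalanced (d + 1) m w := by
  refine ⟨fun h i => ?_, fun h i => ?_⟩
  · simpa [count_cons, add_assoc, add_comm 1] using h (i + 1)
  · cases i with
    | zero => simpa using h.le.trans' (Nat.le_succ d)
    | succ i => simpa [count_cons, add_assoc, add_comm 1] using h i

theorem replicate_U_append (k : ℕ) (hdm : d ≤ m) (h : PrefixBalanced d (m + k) w) :
    PrefixBalanced d m (replicate k U ++ w) := by
  induction k generalizing m with
  | zero => simpa using h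
  | succ k ih =>
    rw [replicate_succ, cons_append, cons_U_iff]
    exact ⟨hdm, ih (by omega) (by rwa [add_right_comm, add_assoc])⟩

end PrefixBalanced

section DyckSteps

variable {n d m : ℕ} {M : List ℕ} {w : List DyckStep}

theorem count_D_dyckStepsOfRecordBounds : (dyckStepsOfRecordBounds m M).count D = M.length := by
  induction M generalizing m with
  | nil => rfl
  | cons r M ih => simp [dyckStepsOfRecordBounds, count_replicate, ih]

theorem IsRecordBounds.add_count_U (h : IsRecordBounds n d m M) :
    m + (dyckStepsOfRecordBounds m M).count U = n := by
  induction M generalizing d m with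
  | nil => exact h.2
  | cons r M ih =>
    have := ih h.2.2
    have := h.1
    simp only [dyckStepsOfRecordBounds, count_append, count_replicate_self, ne_eq, reduceCtorEq,
      not_false_eq_true, count_cons_of_ne]
    omega

theorem IsRecordBounds.prefixBalanced (hdm : d ≤ m) (h : IsRecordBounds n d m M) :
    PrefixBalanced d m (dyckStepsOfRecordBounds m M) := by
  induction M generalizing d m with
  | nil => intro i; simp [dyckStepsOfRecordBounds, hdm]
  | cons r M ih =>
    refine PrefixBalanced.replicate_U_append _ hdm ?_
    rw [Nat.add_sub_cancel' h.1, PrefixBalanced.cons_D_iff]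
    exact ih h.2.1 h.2.2

theorem isRecordBounds_recordBoundsOfDyckSteps (h : PrefixBalanced d m w)
    (hd : d + w.count D = n) (hm : m + w.count U = n) :
    IsRecordBounds n d m (recordBoundsOfDyckSteps m w) := by
  induction w generalizing d m with
  | nil => exact ⟨hd, hm⟩
  | cons s w ih =>
    cases s with
    | U =>
      rw [PrefixBalanced.cons_U_iff] at h
      exact (ih h.2 (by simpa using hd) (by simp only [count_cons_self] at hm; omega)).of_succ h.1
    | D =>
      rw [PrefixBalanced.cons_D_iff] at h
      have hd' : d + 1 + w.count D = n := by simp only [count_cons_self] at hd; omega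
      exact ⟨le_rfl, h.le, ih h hd' (by simpa using hm)⟩

theorem recordBoundsOfDyckSteps_replicate_U_append (k : ℕ) :
    recordBoundsOfDyckSteps m (replicate k U ++ w) = recordBoundsOfDyckSteps (m + k) w := by
  induction k generalizing m with
  | zero => rfl
  | succ k ih =>
    rw [replicate_succ, cons_append, recordBoundsOfDyckSteps, ih, add_right_comm, add_assoc]

theorem recordBoundsOfDyckSteps_dyckStepsOfRecordBounds (h : (m :: M).IsChain (· ≤ ·)) :
    recordBoundsOfDyckSteps m (dyckStepsOfRecordBounds m M) = M := by
  induction M generalizing m with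
  | nil => rfl
  | cons r M ih =>
    rw [isChain_cons_cons] at h
    rw [dyckStepsOfRecordBounds, recordBoundsOfDyckSteps_replicate_U_append,
      Nat.add_sub_cancel' h.1, recordBoundsOfDyckSteps, ih h.2]

theorem le_of_mem_recordBoundsOfDyckSteps {x : ℕ} (hx : x ∈ recordBoundsOfDyckSteps m w) :
    m ≤ x := by
  induction w generalizing m with
  | nil => simp [recordBoundsOfDyckSteps] at hx
  | cons s w ih =>
    cases s with
    | U => exact (Nat.le_succ m).trans (ih hx)
    | D =>
      rcases mem_cons.1 hx with rfl | hx
      · exact le_rfl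
      · exact ih hx

theorem dyckStepsOfRecordBounds_cons_of_lt {r : ℕ} (hmr : m < r) :
    dyckStepsOfRecordBounds m (r :: M) = U :: dyckStepsOfRecordBounds (m + 1) (r :: M) := by
  rw [dyckStepsOfRecordBounds, dyckStepsOfRecordBounds, show r - m = r - (m + 1) + 1 by omega,
    replicate_succ, cons_append]

theorem dyckStepsOfRecordBounds_recordBoundsOfDyckSteps (hw : w.getLast? ≠ some U) :
    dyckStepsOfRecordBounds m (recordBoundsOfDyckSteps m w) = w := by
  induction w generalizing m with
  | nil => rfl
  | cons s w ih =>
    have hw' : w.getLast? ≠ some U := by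
      cases w with
      | nil => simp
      | cons _ _ => simpa [getLast?_cons] using hw
    cases s with
    | U =>
      have hne : w ≠ [] := by rintro rfl; simp at hw
      obtain ⟨r, B, hB⟩ := exists_cons_of_ne_nil (l := recordBoundsOfDyckSteps (m + 1) w)
        fun hB => hne (by rw [← ih hw', hB]; rfl)
      have hmr : m < r := le_of_mem_recordBoundsOfDyckSteps (hB ▸ mem_cons_self)
      rw [recordBoundsOfDyckSteps, hB, dyckStepsOfRecordBounds_cons_of_lt hmr, ← hB, ih hw']
    | D =>
      rw [recordBoundsOfDyckSteps, dyckStepsOfRecordBounds, Nat.sub_self, replicate_zero,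
        nil_append, ih hw']

end DyckSteps

theorem DyckWord.getLast?_ne_some_U (p : DyckWord) : p.toList.getLast? ≠ some U := by
  by_cases hp : p = 0
  · simp [DyckWord.toList_eq_nil.2 hp]
  · rw [getLast?_eq_some_getLast (DyckWord.toList_ne_nil.2 hp), DyckWord.getLast_eq_D]
    simp

theorem avoids321_iff_ofFn {n : ℕ} (π : Equiv.Perm (Fin n)) :
    Avoids321 π ↔ (ofFn fun i => (π i : ℕ)).Avoids321 := by
  rw [ofFn_eq_map]
  constructor
  · intro h a b c hs
    obtain ⟨l, hl, hmap⟩ := sublist_map_iff.1 hs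
    rcases l with _ | ⟨i, _ | ⟨j, _ | ⟨k, _ | _⟩⟩⟩ <;> simp at hmap
    obtain ⟨rfl, rfl, rfl⟩ := hmap
    have hsorted := (pairwise_lt_finRange n).sublist hl
    simp only [pairwise_cons, mem_cons, forall_eq_or_imp] at hsorted
    exact fun ⟨hkj, hji⟩ => h ⟨i, j, k, hsorted.1.1, hsorted.2.1.1, hkj, hji⟩
  · rintro h ⟨i, j, k, hij, hjk, hkj, hji⟩
    have hsorted : [i, j, k].Pairwise (· < ·) := by simp [hij, hjk, hij.trans hjk]
    refine h _ _ _ (sublist_map_iff.2 ⟨[i, j, k], ?_, rfl⟩) ⟨hkj, hji⟩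
    exact sublist_of_subperm_of_pairwise
      (subperm_of_subset (hsorted.imp ne_of_lt) fun x _ => mem_finRange x)
      hsorted (pairwise_lt_finRange n)

noncomputable def permEquivPermRange (n : ℕ) :
    Equiv.Perm (Fin n) ≃ {l : List ℕ // l ~ range n} where
  toFun π := ⟨ofFn fun i => (π i : ℕ),
    (π.ofFn_comp_perm Fin.val).trans (by rw [ofFn_eq_map, map_coe_finRange_eq_range])⟩
  invFun l := Equiv.ofBijective
    (fun i => ⟨l.1[i]'(by simp [l.2.length_eq]),
      by simpa using l.2.subset (getElem_mem (by simp [l.2.length_eq]))⟩)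
    (Finite.injective_iff_bijective.1 fun i j hij => by
      simpa [Fin.ext_iff, (l.2.nodup_iff.2 nodup_range).getElem_inj_iff] using hij)
  left_inv π := by ext i; simp
  right_inv l := Subtype.ext (ext_getElem (by simp [l.2.length_eq]) fun i _ _ => by simp)

noncomputable def avoids321PermEquivList (n : ℕ) :
    {π : Equiv.Perm (Fin n) // Avoids321 π} ≃ {l : List ℕ // l ~ range n ∧ l.Avoids321} :=
  ((permEquivPermRange n).subtypeEquiv avoids321_iff_ofFn).trans
    (Equiv.subtypeSubtypeEquivSubtypeInter _ List.Avoids321)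

def avoids321ListEquivRecordBounds (n : ℕ) :
    {l : List ℕ // l ~ range n ∧ l.Avoids321} ≃ {M : List ℕ // IsRecordBounds n 0 0 M} where
  toFun l := ⟨recordBounds 0 l.1, by
    simpa using isRecordBounds_recordBounds (p := []) (l.2.1.nodup_iff.2 nodup_range) (by simp)
      (Nat.zero_le n) (fun x hx => by simpa using l.2.1.subset hx) (by simp [l.2.1.length_eq])⟩
  invFun M := ⟨ofRecordBounds 0 [] M.1, by
    simpa [range_eq_range'] using ofRecordBounds_perm (q := []) M.2 rfl,
    avoids321_ofRecordBounds M.2 rfl (by simp) Pairwise.nil⟩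
  left_inv l := Subtype.ext <| by
    simpa using ofRecordBounds_recordBounds (m := 0) l.2.2 (l.2.1.nodup_iff.2 nodup_range)
      fun x hx y _ hyx =>
        l.2.1.mem_iff.2 (mem_range.2 ((mem_range.1 (l.2.1.mem_iff.1 hx)).trans_le' hyx))
  right_inv M := Subtype.ext (recordBounds_ofRecordBounds M.2 rfl (by simp))

def recordBoundsEquivDyckWord (n : ℕ) :
    {M : List ℕ // IsRecordBounds n 0 0 M} ≃ {p : DyckWord // p.semilength = n} where
  toFun M :=
    ⟨⟨dyckStepsOfRecordBounds 0 M.1, by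
        rw [count_D_dyckStepsOfRecordBounds, ← zero_add (count U _), M.2.add_count_U,
          ← zero_add M.1.length, M.2.add_length],
        fun i => by simpa using M.2.prefixBalanced le_rfl i⟩,
      by simpa [DyckWord.semilength] using M.2.add_count_U⟩
  invFun p := ⟨recordBoundsOfDyckSteps 0 p.1.toList,
    isRecordBounds_recordBoundsOfDyckSteps (fun i => by simpa using p.1.count_D_le_count_U i)
      (by rw [zero_add, ← p.1.semilength_eq_count_D, p.2]) (by rw [zero_add]; exact p.2)⟩
  left_inv M := Subtype.ext (recordBoundsOfDyckSteps_dyckStepsOfRecordBounds M.2.isChain)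
  right_inv p := Subtype.ext (DyckWord.ext
    (dyckStepsOfRecordBounds_recordBoundsOfDyckSteps p.1.getLast?_ne_some_U))

/-- The number of 321-avoiding permutations of `{1,...,n}` is the `n`-th Catalan number. -/
theorem avoids321_card_eq_catalan (n : ℕ) :
    Nat.card {π : Equiv.Perm (Fin n) // Avoids321 π} = catalan n := by
  rw [Nat.card_congr ((avoids321PermEquivList n).trans
      ((avoids321ListEquivRecordBounds n).trans (recordBoundsEquivDyckWord n))),
    Nat.card_eq_fintype_card, DyckWord.card_dyckWord_semilength_eq_catalan]
end

section
/- The number of permutations of {1,...,n} that avoid 321 equals the number of permutations of {1,...,n} that avoid 132. -/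
/-- A permutation avoids 132 if there are no indices `i < j < k` with `π i < π k < π j`. -/
def Avoids132 {n : ℕ} (π : Equiv.Perm (Fin n)) : Prop :=
  ¬ ∃ i j k : Fin n, i < j ∧ j < k ∧ π i < π k ∧ π k < π j

/-!
Every permutation of `Fin (n + 1)` arises in exactly one way by inserting the new maximum `n` into
a gap of a permutation `σ` of `Fin n`, and it avoids 132 (resp. 321) iff `σ` does and the gap is
*active*: every entry to its left exceeds every entry to its right (resp. the entries to its right
increase). If `σ` has `t` active gaps, its children have `2, 3, …, t + 1` active gaps, in both
cases. For 132, inserting into the `i`-th active gap from the right leaves active exactly the gap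
in front and the `i` formerly active gaps from the insertion point on. For 321, the active gaps
form a final segment; inserting at the end adds one active gap, inserting elsewhere leaves active
exactly the gaps right of the maximum. So both classes grow along the same generating tree
`(1)`, `(t) ⇝ (2)(3)⋯(t+1)`, and have equally many elements of each size.
-/

open Equiv Finset

theorem Fin.val_succAbove {n : ℕ} (p : Fin (n + 1)) (i : Fin n) :
    (p.succAbove i : ℕ) = if (i : ℕ) < p then (i : ℕ) else i + 1 := by
  unfold Fin.succAbove
  split_ifs <;> simp_all [Fin.lt_def]

theorem Multiset.finsetSum_bind {ι α β : Type*} (s : Finset ι) (f : ι → Multiset α)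
    (g : α → Multiset β) : (∑ i ∈ s, f i).bind g = ∑ i ∈ s, (f i).bind g := by
  induction s using Finset.cons_induction <;> simp [*, Multiset.add_bind]

theorem Finset.map_val_eq_val_of_injOn {α β : Type*} [DecidableEq β] {s : Finset α}
    {t : Finset β} {f : α → β} (hinj : Set.InjOn f s) (hmaps : Set.MapsTo f s t)
    (hcard : #t ≤ #s) : s.val.map f = t.val := by
  rw [← Finset.image_val_of_injOn hinj, Finset.eq_of_subset_of_card_le
    (Finset.image_subset_iff.2 hmaps) (by rwa [Finset.card_image_of_injOn hinj])]

theorem Finset.map_one_add_card_filter_ge_eq_Icc {β : Type*} [LinearOrder β] (s : Finset β) :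
    s.val.map (fun p ↦ 1 + #(s.filter (p ≤ ·))) = (Icc 2 (#s + 1)).val := by
  apply Finset.map_val_eq_val_of_injOn
  · refine StrictAntiOn.injOn fun a ha b _ hab ↦ ?_
    have hsub : s.filter (b ≤ ·) ⊆ s.filter (a ≤ ·) := fun x hx ↦ by
      simp only [mem_filter] at hx ⊢
      exact ⟨hx.1, hab.le.trans hx.2⟩
    have : s.filter (b ≤ ·) ⊂ s.filter (a ≤ ·) :=
      (Finset.ssubset_iff_of_subset hsub).2 ⟨a, by simpa using ha, by simp [hab]⟩
    simpa using Finset.card_lt_card this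
  · intro p hp
    simp only [coe_Icc, Set.mem_Icc, add_comm 1]
    exact ⟨Nat.add_le_add_right (Finset.card_pos.2 ⟨p, by simpa using hp⟩) 1,
      Nat.add_le_add_right (Finset.card_filter_le _ _) 1⟩
  · simp

namespace PatternAvoidance

section Words

variable {α β : Type*} [LinearOrder α] [LinearOrder β] {n : ℕ}

def Contains132 (w : Fin n → α) : Prop :=
  ∃ i j k, i < j ∧ j < k ∧ w i < w k ∧ w k < w j

def Contains321 (w : Fin n → α) : Prop :=
  ∃ i j k, i < j ∧ j < k ∧ w k < w j ∧ w j < w i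

-- The gap `p : Fin (n + 1)` of `w` lies just before position `p`; inserting into it is
-- `Fin.insertNth p`.
def activeSites132 (w : Fin n → α) : Finset (Fin (n + 1)) :=
  {p | ∀ i j : Fin n, i.castSucc < p → p ≤ j.castSucc → w j ≤ w i}

def activeSites321 (w : Fin n → α) : Finset (Fin (n + 1)) :=
  {p | ∀ i j : Fin n, p ≤ i.castSucc → i < j → w i ≤ w j}

theorem contains132_comp {f : α → β} (hf : StrictMono f) (w : Fin n → α) :
    Contains132 (f ∘ w) ↔ Contains132 w := by
  simp [Contains132, hf.lt_iff_lt]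

theorem contains321_comp {f : α → β} (hf : StrictMono f) (w : Fin n → α) :
    Contains321 (f ∘ w) ↔ Contains321 w := by
  simp [Contains321, hf.lt_iff_lt]

theorem activeSites132_comp {f : α → β} (hf : StrictMono f) (w : Fin n → α) :
    activeSites132 (f ∘ w) = activeSites132 w := by
  simp [activeSites132, hf.le_iff_le]

theorem activeSites321_comp {f : α → β} (hf : StrictMono f) (w : Fin n → α) :
    activeSites321 (f ∘ w) = activeSites321 w := by
  simp [activeSites321, hf.le_iff_le]

theorem Ici_subset_activeSites321 {w : Fin n → α} {p : Fin (n + 1)}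
    (hp : p ∈ activeSites321 w) :
    Ici p ⊆ activeSites321 w := by
  intro q hq
  simp only [activeSites321, mem_filter, mem_univ, true_and, mem_Ici] at hp hq ⊢
  exact fun i j hi hij ↦ hp i j (hq.trans hi) hij

section InsertNth

variable {w : Fin n → α} {M : α} (hM : ∀ i, w i < M) (p : Fin (n + 1))
include hM

theorem insertNth_le (x : Fin (n + 1)) : Fin.insertNth (α := fun _ ↦ α) p M w x ≤ M := by
  rcases Fin.eq_self_or_eq_succAbove p x with rfl | ⟨i, rfl⟩
  · simp
  · simpa using (hM i).le

theorem contains132_insertNth_iff :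
    Contains132 (Fin.insertNth p M w) ↔ Contains132 w ∨ p ∉ activeSites132 w := by
  have hle := insertNth_le hM p
  simp only [activeSites132, mem_filter, mem_univ, true_and, not_forall, not_le]
  constructor
  · rintro ⟨a, b, c, hab, hbc, hac, hcb⟩
    rcases Fin.eq_self_or_eq_succAbove p a with rfl | ⟨i, rfl⟩
    · exact absurd (hle c) (by simpa using hac)
    rcases Fin.eq_self_or_eq_succAbove p c with rfl | ⟨k, rfl⟩
    · exact absurd (hle b) (by simpa using hcb)
    rcases Fin.eq_self_or_eq_succAbove p b with rfl | ⟨j, rfl⟩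
    · right
      refine ⟨i, k, ?_, ?_, by simpa using hac⟩
      · exact (Fin.succAbove_lt_iff_castSucc_lt _ _).1 hab
      · exact (Fin.lt_succAbove_iff_le_castSucc _ _).1 hbc
    · left
      exact ⟨i, j, k, by simpa using hab, by simpa using hbc, by simpa using hac,
        by simpa using hcb⟩
  · rintro (⟨i, j, k, hij, hjk, hik, hkj⟩ | ⟨i, k, hi, hk, hik⟩)
    · refine ⟨p.succAbove i, p.succAbove j, p.succAbove k, ?_, ?_, ?_, ?_⟩ <;> simpa
    · refine ⟨p.succAbove i, p, p.succAbove k, ?_, ?_, ?_, ?_⟩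
      · exact (Fin.succAbove_lt_iff_castSucc_lt _ _).2 hi
      · exact (Fin.lt_succAbove_iff_le_castSucc _ _).2 hk
      · simpa using hik
      · simpa using hM k

theorem contains321_insertNth_iff :
    Contains321 (Fin.insertNth p M w) ↔ Contains321 w ∨ p ∉ activeSites321 w := by
  have hle := insertNth_le hM p
  simp only [activeSites321, mem_filter, mem_univ, true_and, not_forall, not_le]
  constructor
  · rintro ⟨a, b, c, hab, hbc, hcb, hba⟩
    rcases Fin.eq_self_or_eq_succAbove p b with rfl | ⟨j, rfl⟩
    · exact absurd (hle a) (by simpa using hba)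
    rcases Fin.eq_self_or_eq_succAbove p c with rfl | ⟨k, rfl⟩
    · exact (lt_asymm (hM j) (by simpa using hcb)).elim
    rcases Fin.eq_self_or_eq_succAbove p a with rfl | ⟨i, rfl⟩
    · right
      refine ⟨j, k, ?_, ?_, by simpa using hcb⟩
      · exact (Fin.lt_succAbove_iff_le_castSucc _ _).1 hab
      · simpa [Fin.succAbove_lt_succAbove_iff] using hbc
    · left
      exact ⟨i, j, k, by simpa using hab, by simpa using hbc, by simpa using hcb,
        by simpa using hba⟩
  · rintro (⟨i, j, k, hij, hjk, hkj, hji⟩ | ⟨j, k, hj, hjk, hkj⟩)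
    · refine ⟨p.succAbove i, p.succAbove j, p.succAbove k, ?_, ?_, ?_, ?_⟩ <;> simpa
    · refine ⟨p, p.succAbove j, p.succAbove k, ?_, ?_, ?_, ?_⟩
      · exact (Fin.lt_succAbove_iff_le_castSucc _ _).2 hj
      · simpa using hjk
      · simpa using hkj
      · simpa using hM j

theorem activeSites132_insertNth :
    activeSites132 (Fin.insertNth p M w) =
      insert 0 (((activeSites132 w).filter (p ≤ ·)).map (Fin.succEmb (n + 1))) := by
  ext q
  refine Fin.cases ?_ (fun r ↦ ?_) q
  · simp [activeSites132]
  simp only [activeSites132, mem_filter, mem_univ, true_and, mem_insert, Fin.succ_ne_zero,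
    mem_map, Fin.coe_succEmb, Fin.succ_inj, exists_eq_right, false_or, Fin.castSucc_lt_succ_iff,
    Fin.succ_le_castSucc_iff]
  constructor
  · intro h
    have hpr : p ≤ r := by
      -- otherwise the first entry and the maximum lie on either side of the gap
      by_contra! hrp
      obtain ⟨i, hi⟩ : ∃ i, 0 = p.succAbove i :=
        (Fin.eq_self_or_eq_succAbove p 0).resolve_left ((Fin.zero_le r).trans_lt hrp).ne
      have := h 0 p (Fin.zero_le r) hrp
      rw [hi, Fin.insertNth_apply_same, Fin.insertNth_apply_succAbove] at this
      exact (hM i).not_ge this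
    refine ⟨fun i j hi hj ↦ ?_, hpr⟩
    simpa using h (p.succAbove i) (p.succAbove j) (by
      simp only [Fin.le_def, Fin.lt_def, Fin.val_succAbove, Fin.val_castSucc] at *
      split_ifs <;> omega) (by
      simp only [Fin.le_def, Fin.lt_def, Fin.val_succAbove, Fin.val_castSucc] at *
      split_ifs <;> omega)
  · rintro ⟨h, hpr⟩ a b ha hb
    rcases Fin.eq_self_or_eq_succAbove p b with rfl | ⟨j, rfl⟩
    · exact absurd (hpr.trans_lt hb) (lt_irrefl _)
    rcases Fin.eq_self_or_eq_succAbove p a with rfl | ⟨i, rfl⟩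
    · simpa using (hM j).le
    simp only [Fin.insertNth_apply_succAbove]
    simp only [Fin.le_def, Fin.lt_def, Fin.val_succAbove] at ha hb hpr
    apply h <;> simp only [Fin.le_def, Fin.lt_def, Fin.val_castSucc] <;>
      split_ifs at ha hb <;> omega

theorem activeSites321_insertNth_last :
    activeSites321 (Fin.insertNth (Fin.last n) M w) =
      insert (Fin.last (n + 1)) ((activeSites321 w).map Fin.castSuccEmb) := by
  ext q
  refine Fin.lastCases ?_ (fun r ↦ ?_) q
  · simp [activeSites321]
  simp only [activeSites321, mem_filter, mem_univ, true_and, mem_insert, mem_map,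
    Fin.coe_castSuccEmb, Fin.castSucc_inj, exists_eq_right, Fin.castSucc_le_castSucc_iff,
    Fin.insertNth_last', Fin.castSucc_ne_last, false_or]
  constructor
  · intro h i j hi hij
    simpa using h i.castSucc j.castSucc hi (Fin.castSucc_lt_castSucc_iff.2 hij)
  · intro h a b ha hab
    obtain ⟨j, rfl⟩ | rfl := Fin.eq_castSucc_or_eq_last b
    · obtain ⟨i, rfl⟩ | rfl := Fin.eq_castSucc_or_eq_last a
      · simpa using h i j ha (Fin.castSucc_lt_castSucc_iff.1 hab)
      · exact absurd hab (Fin.castSucc_lt_last j).not_gt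
    · obtain ⟨i, rfl⟩ | rfl := Fin.eq_castSucc_or_eq_last a
      · simpa using (hM i).le
      · simp

theorem activeSites321_insertNth_of_ne_last (hp : p ∈ activeSites321 w) (hpl : p ≠ Fin.last n) :
    activeSites321 (Fin.insertNth p M w) = Ioi p.castSucc := by
  ext q
  simp only [activeSites321, mem_filter, mem_univ, true_and, mem_Ioi]
  constructor
  · intro h
    by_contra! hq
    obtain ⟨p', rfl⟩ := Fin.exists_castSucc_eq.2 hpl
    have := h p'.castSucc p'.succ hq (Fin.castSucc_lt_succ)
    rw [← Fin.succAbove_castSucc_self, Fin.insertNth_apply_same,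
      Fin.insertNth_apply_succAbove] at this
    exact (hM p').not_ge this
  · intro h a b ha hab
    have hpa : p < a := Fin.castSucc_lt_castSucc_iff.1 (h.trans_le ha)
    obtain rfl | ⟨i, rfl⟩ := Fin.eq_self_or_eq_succAbove p a
    · exact absurd hpa (lt_irrefl _)
    obtain rfl | ⟨j, rfl⟩ := Fin.eq_self_or_eq_succAbove p b
    · exact absurd (hpa.trans hab) (lt_irrefl _)
    simp only [Fin.insertNth_apply_succAbove]
    simp only [activeSites321, mem_filter, mem_univ, true_and] at hp
    exact hp i j ((Fin.lt_succAbove_iff_le_castSucc _ _).1 hpa)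
      (Fin.succAbove_lt_succAbove_iff.1 hab)

end InsertNth

end Words

section InsertMax

variable {n : ℕ}

def insertMax (p : Fin (n + 1)) (σ : Perm (Fin n)) : Perm (Fin (n + 1)) :=
  (finSuccEquiv' p).trans ((optionCongr σ).trans finSuccEquivLast.symm)

theorem coe_insertMax (p : Fin (n + 1)) (σ : Perm (Fin n)) :
    ⇑(insertMax p σ) = Fin.insertNth p (Fin.last n) (Fin.castSucc ∘ σ) := by
  ext x
  rcases Fin.eq_self_or_eq_succAbove p x with rfl | ⟨i, rfl⟩ <;> simp [insertMax]

theorem insertMax_injective :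
    Function.Injective fun x : Fin (n + 1) × Perm (Fin n) ↦ insertMax x.1 x.2 := by
  rintro ⟨p, σ⟩ ⟨q, τ⟩ (h : insertMax p σ = insertMax q τ)
  have hp : p = q := (insertMax q τ).injective <| by
    rw [show insertMax q τ p = insertMax p σ p by rw [h]]; simp [coe_insertMax]
  subst hp
  refine Prod.ext rfl (Equiv.ext fun i ↦ ?_)
  simpa [coe_insertMax] using DFunLike.congr_fun h (p.succAbove i)

noncomputable def insertMaxEquiv : Fin (n + 1) × Perm (Fin n) ≃ Perm (Fin (n + 1)) :=
  Equiv.ofBijective _ <| (Fintype.bijective_iff_injective_and_card _).2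
    ⟨insertMax_injective, by simp [Fintype.card_perm, Nat.factorial_succ]⟩

end InsertMax

section GeneratingTree

def catalanTreeLevel : ℕ → Multiset ℕ
  | 0 => {1}
  | n + 1 => (catalanTreeLevel n).bind fun t ↦ (Icc 2 (t + 1)).val

variable (P : ∀ {n : ℕ}, Perm (Fin n) → Prop)
  (sites : ∀ {n : ℕ}, Perm (Fin n) → Finset (Fin (n + 1)))

structure IsCatalanGeneratingTree : Prop where
  root : ∀ σ : Perm (Fin 0), P σ ∧ #(sites σ) = 1
  insertMax_iff : ∀ {n} (p : Fin (n + 1)) (σ : Perm (Fin n)),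
    P (insertMax p σ) ↔ P σ ∧ p ∈ sites σ
  children : ∀ {n} (σ : Perm (Fin n)), P σ →
    (sites σ).val.map (fun p ↦ #(sites (insertMax p σ))) = (Icc 2 (#(sites σ) + 1)).val

open scoped Classical in
noncomputable def siteCounts (n : ℕ) : Multiset ℕ :=
  ∑ σ : Perm (Fin n), if P σ then {#(sites σ)} else 0

theorem card_siteCounts (n : ℕ) :
    Multiset.card (siteCounts P sites n) = Nat.card {σ : Perm (Fin n) // P σ} := by
  classical
  simp [siteCounts, Multiset.card_sum, apply_ite, Nat.card_eq_fintype_card,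
    Fintype.card_subtype]

variable {P sites}

theorem IsCatalanGeneratingTree.siteCounts_succ (h : IsCatalanGeneratingTree P sites) (n : ℕ) :
    siteCounts P sites (n + 1) = (siteCounts P sites n).bind fun t ↦ (Icc 2 (t + 1)).val := by
  classical
  calc siteCounts P sites (n + 1)
      = ∑ x : Fin (n + 1) × Perm (Fin n),
          if P (insertMax x.1 x.2) then {#(sites (insertMax x.1 x.2))} else 0 := by
        rw [siteCounts, ← insertMaxEquiv.sum_comp]; rfl
    _ = ∑ σ : Perm (Fin n),
          if P σ then ∑ p ∈ sites σ, {#(sites (insertMax p σ))} else 0 := by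
        rw [Fintype.sum_prod_type_right]
        refine Fintype.sum_congr _ _ fun σ ↦ ?_
        simp only [h.insertMax_iff, ite_and]
        split_ifs <;> simp [Finset.sum_ite_mem]
    _ = ∑ σ : Perm (Fin n), if P σ then (Icc 2 (#(sites σ) + 1)).val else 0 := by
        refine Fintype.sum_congr _ _ fun σ ↦ ?_
        split_ifs with hσ
        · rw [← h.children σ hσ, ← Multiset.sum_map_singleton (Multiset.map _ _),
            Multiset.map_map]
          rfl
        · rfl
    _ = _ := by
        rw [siteCounts, Multiset.finsetSum_bind]
        refine Fintype.sum_congr _ _ fun σ ↦ ?_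
        split_ifs <;> simp

theorem IsCatalanGeneratingTree.siteCounts_eq (h : IsCatalanGeneratingTree P sites) :
    ∀ n, siteCounts P sites n = catalanTreeLevel n
  | 0 => by simp [siteCounts, catalanTreeLevel, h.root]
  | n + 1 => by rw [h.siteCounts_succ, h.siteCounts_eq n, catalanTreeLevel]

theorem IsCatalanGeneratingTree.card_eq (h : IsCatalanGeneratingTree P sites) (n : ℕ) :
    Nat.card {σ : Perm (Fin n) // P σ} = Multiset.card (catalanTreeLevel n) := by
  rw [← card_siteCounts, h.siteCounts_eq]

end GeneratingTree

section Perms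

variable {n : ℕ}

theorem castSucc_comp_lt_last (σ : Perm (Fin n)) (i : Fin n) :
    (Fin.castSucc ∘ σ) i < Fin.last n :=
  Fin.castSucc_lt_last _

theorem avoids132_insertMax_iff (p : Fin (n + 1)) (σ : Perm (Fin n)) :
    Avoids132 (insertMax p σ) ↔ Avoids132 σ ∧ p ∈ activeSites132 ⇑σ := by
  change ¬Contains132 ⇑(insertMax p σ) ↔ ¬Contains132 ⇑σ ∧ _
  rw [coe_insertMax, contains132_insertNth_iff (castSucc_comp_lt_last σ),
    contains132_comp Fin.strictMono_castSucc, activeSites132_comp Fin.strictMono_castSucc,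
    not_or, not_not]

theorem avoids321_insertMax_iff (p : Fin (n + 1)) (σ : Perm (Fin n)) :
    Avoids321 (insertMax p σ) ↔ Avoids321 σ ∧ p ∈ activeSites321 ⇑σ := by
  change ¬Contains321 ⇑(insertMax p σ) ↔ ¬Contains321 ⇑σ ∧ _
  rw [coe_insertMax, contains321_insertNth_iff (castSucc_comp_lt_last σ),
    contains321_comp Fin.strictMono_castSucc, activeSites321_comp Fin.strictMono_castSucc,
    not_or, not_not]

theorem card_activeSites132_insertMax (p : Fin (n + 1)) (σ : Perm (Fin n)) :
    #(activeSites132 ⇑(insertMax p σ)) = 1 + #((activeSites132 ⇑σ).filter (p ≤ ·)) := by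
  rw [coe_insertMax, activeSites132_insertNth (castSucc_comp_lt_last σ),
    card_insert_of_notMem (by simp [Fin.succ_ne_zero]), card_map,
    activeSites132_comp Fin.strictMono_castSucc, add_comm]

theorem card_activeSites321_insertMax {p : Fin (n + 1)} {σ : Perm (Fin n)}
    (hp : p ∈ activeSites321 ⇑σ) :
    #(activeSites321 ⇑(insertMax p σ)) =
      if p = Fin.last n then #(activeSites321 ⇑σ) + 1 else n + 1 - p := by
  have hM := castSucc_comp_lt_last σ
  rw [coe_insertMax]
  split_ifs with hpl
  · subst hpl
    rw [activeSites321_insertNth_last hM, card_insert_of_notMem (by simp), card_map,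
      activeSites321_comp Fin.strictMono_castSucc]
  · rw [activeSites321_insertNth_of_ne_last hM p
      (by rwa [activeSites321_comp Fin.strictMono_castSucc]) hpl, Fin.card_Ioi]
    simp only [Fin.val_castSucc]
    omega

theorem map_card_activeSites321_insertMax (σ : Perm (Fin n)) :
    (activeSites321 ⇑σ).val.map (fun p ↦ #(activeSites321 ⇑(insertMax p σ))) =
      (Icc 2 (#(activeSites321 ⇑σ) + 1)).val := by
  rw [Multiset.map_congr rfl fun p hp ↦ card_activeSites321_insertMax hp]
  set S := activeSites321 ⇑σ
  have hS : ∀ p ∈ S, n + 1 - p ≤ #S := fun p hp ↦ by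
    simpa [Fin.card_Ici] using card_le_card (Ici_subset_activeSites321 hp)
  apply Finset.map_val_eq_val_of_injOn
  · intro p hp q hq hpq
    have := hS p hp
    have := hS q hq
    dsimp only at hpq
    split_ifs at hpq with hpl hql hql
    · exact hpl.trans hql.symm
    · omega
    · omega
    · have := Fin.val_lt_last hpl
      have := Fin.val_lt_last hql
      exact Fin.ext (by omega)
  · intro p hp
    simp only [coe_Icc, Set.mem_Icc]
    have := hS p hp
    have := Finset.card_pos.2 ⟨p, hp⟩
    split_ifs with hpl
    · omega
    · have := Fin.val_lt_last hpl
      omega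
  · simp

end Perms

theorem isCatalanGeneratingTree_avoids132 :
    IsCatalanGeneratingTree Avoids132 fun σ ↦ activeSites132 ⇑σ where
  root σ := ⟨fun ⟨i, _⟩ ↦ i.elim0, by simp [activeSites132]⟩
  insertMax_iff := avoids132_insertMax_iff
  children σ _ := by
    simp_rw [card_activeSites132_insertMax]
    exact Finset.map_one_add_card_filter_ge_eq_Icc _

theorem isCatalanGeneratingTree_avoids321 :
    IsCatalanGeneratingTree Avoids321 fun σ ↦ activeSites321 ⇑σ where
  root σ := ⟨fun ⟨i, _⟩ ↦ i.elim0, by simp [activeSites321]⟩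
  insertMax_iff := avoids321_insertMax_iff
  children σ _ := map_card_activeSites321_insertMax σ

end PatternAvoidance

/-- The number of 321-avoiding permutations of `{1,...,n}` equals the number of
132-avoiding permutations of `{1,...,n}`. -/
theorem card_avoids321_eq_card_avoids132 (n : ℕ) :
    Nat.card {π : Equiv.Perm (Fin n) // Avoids321 π} =
      Nat.card {π : Equiv.Perm (Fin n) // Avoids132 π} := by
  rw [PatternAvoidance.isCatalanGeneratingTree_avoids321.card_eq,
    PatternAvoidance.isCatalanGeneratingTree_avoids132.card_eq]
end

section
/- For 1 ≤ k ≤ n, the number of 321-avoiding permutations of {1,...,n} with exactly k left-to-right maxima is the Narayana number (1/n)·C(n,k)·C(n,k−1). -/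
def IsLRMax {n : ℕ} (π : Equiv.Perm (Fin n)) (i : Fin n) : Prop :=
  ∀ j : Fin n, j < i → π j < π i

open Finset

namespace Narayana

section IncreasingPerm

variable {α : Type*}

lemma image_perm_eq_of_forall_mem_iff [DecidableEq α] {π : Equiv.Perm α} {P V : Finset α}
    (h : ∀ x, π x ∈ V ↔ x ∈ P) : P.image π = V := by
  ext y
  rw [mem_image]
  exact ⟨by rintro ⟨x, hx, rfl⟩; exact (h x).2 hx,
    fun hy => ⟨π.symm y, (h _).1 (by simpa using hy), by simp⟩⟩

lemma subtypeCongr_apply_of_pos {p q : α → Prop} [DecidablePred p] [DecidablePred q]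
    (e : {x // p x} ≃ {x // q x}) (f : {x // ¬p x} ≃ {x // ¬q x}) {x : α} (hx : p x) :
    Equiv.subtypeCongr e f x = e ⟨x, hx⟩ := by
  simp [Equiv.subtypeCongr, Equiv.sumCompl_symm_apply_of_pos hx]

lemma subtypeCongr_apply_of_neg {p q : α → Prop} [DecidablePred p] [DecidablePred q]
    (e : {x // p x} ≃ {x // q x}) (f : {x // ¬p x} ≃ {x // ¬q x}) {x : α} (hx : ¬p x) :
    Equiv.subtypeCongr e f x = f ⟨x, hx⟩ := by
  simp [Equiv.subtypeCongr, Equiv.sumCompl_symm_apply_of_neg hx]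

variable [LinearOrder α]

lemma strictMonoOn_subtypeCongr_of_pos {p q : α → Prop} [DecidablePred p] [DecidablePred q]
    (e : {x // p x} ≃o {x // q x}) (f : {x // ¬p x} ≃ {x // ¬q x}) :
    StrictMonoOn (Equiv.subtypeCongr e.toEquiv f) {x | p x} := fun x hx y hy hxy => by
  rw [subtypeCongr_apply_of_pos _ _ hx, subtypeCongr_apply_of_pos _ _ hy]
  exact e.strictMono (Subtype.mk_lt_mk.2 hxy)

lemma strictMonoOn_subtypeCongr_of_neg {p q : α → Prop} [DecidablePred p] [DecidablePred q]
    (e : {x // p x} ≃ {x // q x}) (f : {x // ¬p x} ≃o {x // ¬q x}) :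
    StrictMonoOn (Equiv.subtypeCongr e f.toEquiv) {x | ¬p x} := fun x hx y hy hxy => by
  rw [subtypeCongr_apply_of_neg _ _ hx, subtypeCongr_apply_of_neg _ _ hy]
  exact f.strictMono (Subtype.mk_lt_mk.2 hxy)

lemma orderIso_apply_eq_perm [Finite α] {p q : α → Prop} (e : {x // p x} ≃o {x // q x})
    {π : Equiv.Perm α} (hπ : ∀ x, q (π x) ↔ p x) (hmono : StrictMonoOn π {x | p x})
    (x : {x // p x}) : (e x : α) = π x := by
  let e' : {x // p x} ≃o {x // q x} :=
    StrictMono.orderIsoOfSurjective (fun y => ⟨π y, (hπ y).2 y.2⟩)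
      (fun a b hab => hmono a.2 b.2 hab)
      (fun y => ⟨⟨π.symm y, (hπ _).1 (by simpa using y.2)⟩, by simp⟩)
  rw [Subsingleton.elim e e']
  rfl

noncomputable def orderIsoOfCardEq {β γ : Type*} [LinearOrder β] [Fintype β] [LinearOrder γ]
    [Fintype γ] (h : Fintype.card β = Fintype.card γ) : β ≃o γ :=
  (Fintype.orderIsoFinOfCardEq β h).symm.trans (Fintype.orderIsoFinOfCardEq γ rfl)

variable [Fintype α] (P V : Finset α) (h : #P = #V)

noncomputable def increasingPerm : Equiv.Perm α :=
  Equiv.subtypeCongr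
    (orderIsoOfCardEq (by simpa using h) : {x // x ∈ P} ≃o {x // x ∈ V}).toEquiv
    (orderIsoOfCardEq (Fintype.card_compl_eq_card_compl _ _ (by simpa using h)) :
      {x // x ∉ P} ≃o {x // x ∉ V}).toEquiv

variable {P V h}

lemma increasingPerm_mem_iff (x : α) : increasingPerm P V h x ∈ V ↔ x ∈ P := by
  by_cases hx : x ∈ P
  · simp only [increasingPerm, subtypeCongr_apply_of_pos _ _ hx, hx, iff_true]
    exact Subtype.prop (p := (· ∈ V)) _
  · simp only [increasingPerm, subtypeCongr_apply_of_neg _ _ hx, hx, iff_false]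
    exact Subtype.prop (p := (· ∉ V)) _

lemma image_increasingPerm : P.image (increasingPerm P V h) = V :=
  image_perm_eq_of_forall_mem_iff increasingPerm_mem_iff

lemma image_compl_increasingPerm : Pᶜ.image (increasingPerm P V h) = Vᶜ :=
  image_perm_eq_of_forall_mem_iff fun x => by simp [increasingPerm_mem_iff]

lemma strictMonoOn_increasingPerm : StrictMonoOn (increasingPerm P V h) P :=
  strictMonoOn_subtypeCongr_of_pos _ _

lemma strictMonoOn_compl_increasingPerm : StrictMonoOn (increasingPerm P V h) ↑Pᶜ := by
  rw [coe_compl]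
  exact strictMonoOn_subtypeCongr_of_neg (p := (· ∈ P)) _ _

lemma eq_increasingPerm {π : Equiv.Perm α} (hπ : ∀ x, π x ∈ V ↔ x ∈ P)
    (hP : StrictMonoOn π P) (hPc : StrictMonoOn π ↑Pᶜ) : π = increasingPerm P V h := by
  ext x
  by_cases hx : x ∈ P
  · rw [increasingPerm, subtypeCongr_apply_of_pos _ _ hx, OrderIso.coe_toEquiv,
      orderIso_apply_eq_perm _ hπ hP]
  · rw [increasingPerm, subtypeCongr_apply_of_neg _ _ hx, OrderIso.coe_toEquiv,
      orderIso_apply_eq_perm _ (fun y => (hπ y).not) (by rwa [coe_compl] at hPc)]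

end IncreasingPerm

section CountLT

variable {n : ℕ}

def countLT (S : Finset (Fin n)) (t : ℕ) : ℕ := #{x ∈ S | x.val < t}

variable (S : Finset (Fin n))

lemma countLT_zero : countLT S 0 = 0 := by simp [countLT]

lemma countLT_mono : Monotone (countLT S) := fun _ _ hst =>
  card_le_card (monotone_filter_right S fun _ _ hx => lt_of_lt_of_le hx hst)

lemma countLT_succ_le (t : ℕ) : countLT S (t + 1) ≤ countLT S t + 1 := by
  have hsplit : {x ∈ S | x.val < t + 1} ⊆ {x ∈ S | x.val < t} ∪ {x ∈ S | x.val = t} := by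
    intro x hx
    obtain ⟨hxS, hxt⟩ := mem_filter.1 hx
    exact mem_union.2 <| (Nat.lt_succ_iff_lt_or_eq.1 hxt).imp
      (fun h => mem_filter.2 ⟨hxS, h⟩) (fun h => mem_filter.2 ⟨hxS, h⟩)
  have hle : #{x ∈ S | x.val = t} ≤ 1 := card_le_one.2 fun a ha b hb =>
    Fin.ext <| ((mem_filter.1 ha).2.trans (mem_filter.1 hb).2.symm :)
  exact (card_le_card hsplit).trans ((card_union_le _ _).trans (by rw [countLT]; omega))

lemma countLT_of_le {t : ℕ} (ht : n ≤ t) : countLT S t = #S := by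
  rw [countLT, filter_true_of_mem fun x _ => x.isLt.trans_le ht]

lemma countLT_add_countLT_compl {t : ℕ} (ht : t ≤ n) : countLT S t + countLT Sᶜ t = t := by
  have hcard : #{x : Fin n | x.val < t} = t := by rw [Fin.card_filter_val_lt, min_eq_right ht]
  conv_rhs => rw [← hcard, ← card_filter_add_card_filter_not (· ∈ S), filter_filter, filter_filter]
  rw [countLT, countLT]
  congr 1 <;> congr 1 <;> ext x <;> simp [and_comm]

lemma countLT_insert_of_le {x : Fin n} {t : ℕ} (ht : t ≤ x) :
    countLT (insert x S) t = countLT S t := by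
  rw [countLT, countLT, filter_insert, if_neg (by omega)]

lemma countLT_map_castSuccEmb (t : ℕ) : countLT (S.map Fin.castSuccEmb) t = countLT S t := by
  rw [countLT, countLT, filter_map, card_map]
  rfl

lemma countLT_map_succEmb (t : ℕ) : countLT (S.map (Fin.succEmb n)) (t + 1) = countLT S t := by
  rw [countLT, countLT, filter_map, card_map]
  congr 1
  exact filter_congr fun x _ => by simp

variable {S}

lemma countLT_insert_of_lt {x : Fin n} {t : ℕ} (hx : x ∉ S) (ht : x < t) :
    countLT (insert x S) t = countLT S t + 1 := by
  rw [countLT, countLT, filter_insert, if_pos ht, card_insert_of_notMem (by simp [hx])]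

lemma countLT_lt_countLT_iff {x : Fin n} (hx : x ∈ S) (t : ℕ) :
    countLT S x < countLT S t ↔ (x : ℕ) < t := by
  refine ⟨fun h => not_le.1 fun hle => h.not_ge (countLT_mono S hle), fun hxt => ?_⟩
  refine card_lt_card ⟨monotone_filter_right S fun _ _ hy => lt_trans hy hxt, fun hsub => ?_⟩
  simpa using (mem_filter.1 (hsub (mem_filter.2 ⟨hx, hxt⟩))).2

lemma countLT_succ_of_notMem {x : Fin n} (hx : x ∉ S) :
    countLT S ((x : ℕ) + 1) = countLT S x := by
  unfold countLT
  congr 1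
  refine filter_congr fun y hy => ?_
  have : (y : ℕ) ≠ x := fun h => hx (Fin.ext h ▸ hy)
  omega

lemma exists_countLT_eq_countLT_add_one {t : ℕ} (h : 0 < countLT S t) :
    ∃ j ∈ S, (j : ℕ) < t ∧ countLT S t = countLT S j + 1 := by
  have hne : ({x ∈ S | x.val < t}).Nonempty := card_pos.1 h
  set j := ({x ∈ S | x.val < t}).max' hne
  obtain ⟨hjS, hjt⟩ := mem_filter.1 (max'_mem _ hne)
  refine ⟨j, hjS, hjt, ?_⟩
  have hsplit : {x ∈ S | x.val < t} = insert j {x ∈ S | x.val < j.val} := by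
    ext x
    simp only [mem_filter, mem_insert]
    constructor
    · intro hx
      rcases (le_max' {x ∈ S | x.val < t} x (mem_filter.2 hx)).lt_or_eq with hlt | heq
      exacts [Or.inr ⟨hx.1, hlt⟩, Or.inl heq]
    · rintro (rfl | ⟨hxS, hxj⟩)
      exacts [⟨hjS, hjt⟩, ⟨hxS, lt_trans hxj hjt⟩]
  rw [countLT, hsplit, card_insert_of_notMem (by simp)]
  rfl

lemma countLT_image (π : Equiv.Perm (Fin n)) (t : ℕ) :
    countLT (S.image π) t = #{x ∈ S | (π x).val < t} := by
  rw [countLT, filter_image, card_image_of_injective _ π.injective]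

lemma countLT_apply_of_image_eq {π : Equiv.Perm (Fin n)} {T : Finset (Fin n)}
    (hπ : StrictMonoOn π S) (hST : S.image π = T) {x : Fin n} (hx : x ∈ S) :
    countLT T (π x) = countLT S x := by
  subst hST
  rw [countLT_image]
  congr 1
  exact filter_congr fun y hy => hπ.lt_iff_lt hy hx

end CountLT

section Reflection

variable {m : ℕ}

def subsetPairs (m a b : ℕ) : Finset (Finset (Fin m) × Finset (Fin m)) :=
  powersetCard a univ ×ˢ powersetCard b univ

@[simp] lemma mem_subsetPairs {a b : ℕ} {p : Finset (Fin m) × Finset (Fin m)} :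
    p ∈ subsetPairs m a b ↔ #p.1 = a ∧ #p.2 = b := by
  simp [subsetPairs]

lemma card_subsetPairs (m a b : ℕ) : #(subsetPairs m a b) = m.choose a * m.choose b := by
  simp [subsetPairs, card_powersetCard]

def Dominated (A B : Finset (Fin m)) : Prop := ∀ t, countLT A t ≤ countLT B t

def prefixSwap (t : ℕ) (A B : Finset (Fin m)) : Finset (Fin m) :=
  {x ∈ B | x.val < t} ∪ {x ∈ A | ¬ x.val < t}

variable (t : ℕ) (A B : Finset (Fin m))

lemma prefixSwap_prefixSwap : prefixSwap t (prefixSwap t A B) (prefixSwap t B A) = A := by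
  ext x
  by_cases hx : x.val < t
  · simp [prefixSwap, hx, not_le.2 hx]
  · simp [prefixSwap, hx, not_lt.1 hx]

lemma countLT_prefixSwap_of_le {s : ℕ} (hst : s ≤ t) :
    countLT (prefixSwap t A B) s = countLT B s := by
  unfold countLT prefixSwap
  congr 1
  ext x
  simp only [mem_filter, mem_union]
  constructor
  · rintro ⟨⟨hB, -⟩ | ⟨-, hxt⟩, hxs⟩
    exacts [⟨hB, hxs⟩, absurd (lt_of_lt_of_le hxs hst) hxt]
  · exact fun ⟨hB, hxs⟩ => ⟨Or.inl ⟨hB, lt_of_lt_of_le hxs hst⟩, hxs⟩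

lemma card_prefixSwap_add : #(prefixSwap t A B) + countLT A t = #A + countLT B t := by
  have hdisj : Disjoint {x ∈ B | x.val < t} {x ∈ A | ¬ x.val < t} :=
    disjoint_left.2 fun x hB hA => (mem_filter.1 hA).2 (mem_filter.1 hB).2
  rw [prefixSwap, card_union_of_disjoint hdisj,
    ← card_filter_add_card_filter_not (s := A) (fun x => x.val < t), countLT, countLT]
  omega

noncomputable def firstExcess (A B : Finset (Fin m)) : ℕ :=
  sInf {t | countLT B t < countLT A t}

variable {A B}

lemma not_dominated_of_card_lt (h : #B < #A) : ¬ Dominated A B := fun hdom => by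
  have := hdom m
  rw [countLT_of_le _ le_rfl, countLT_of_le _ le_rfl] at this
  omega

lemma countLT_lt_countLT_firstExcess (h : ¬ Dominated A B) :
    countLT B (firstExcess A B) < countLT A (firstExcess A B) :=
  Nat.sInf_mem (s := {t | countLT B t < countLT A t}) (by simpa [Dominated, Set.Nonempty] using h)

lemma countLT_le_countLT_of_lt_firstExcess {t : ℕ} (ht : t < firstExcess A B) :
    countLT A t ≤ countLT B t :=
  not_lt.1 (Nat.notMem_of_lt_sInf (s := {t | countLT B t < countLT A t}) ht)

lemma countLT_firstExcess (h : ¬ Dominated A B) :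
    countLT A (firstExcess A B) = countLT B (firstExcess A B) + 1 := by
  have hlt := countLT_lt_countLT_firstExcess h
  obtain ⟨s, hs⟩ : ∃ s, firstExcess A B = s + 1 :=
    Nat.exists_eq_add_one_of_ne_zero fun h0 => by
      simp only [h0, countLT_zero, lt_self_iff_false] at hlt
  have hs_le := countLT_le_countLT_of_lt_firstExcess (A := A) (B := B) (t := s) (by omega)
  have := countLT_succ_le A s
  have := countLT_mono B (Nat.le_add_right s 1)
  rw [hs] at hlt ⊢
  omega

lemma firstExcess_prefixSwap (h : ¬ Dominated A B) :
    firstExcess (prefixSwap (firstExcess A B) B A) (prefixSwap (firstExcess A B) A B) =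
      firstExcess A B := by
  set t₀ := firstExcess A B
  refine IsLeast.csInf_eq ⟨?_, fun t ht => not_lt.1 fun htt => ?_⟩
  · change countLT _ t₀ < countLT _ t₀
    rw [countLT_prefixSwap_of_le t₀ _ _ le_rfl, countLT_prefixSwap_of_le t₀ _ _ le_rfl]
    exact countLT_lt_countLT_firstExcess h
  · change countLT _ t < countLT _ t at ht
    rw [countLT_prefixSwap_of_le t₀ _ _ htt.le, countLT_prefixSwap_of_le t₀ _ _ htt.le] at ht
    exact (countLT_le_countLT_of_lt_firstExcess htt).not_gt ht

noncomputable def reflect (p : Finset (Fin m) × Finset (Fin m)) :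
    Finset (Fin m) × Finset (Fin m) :=
  (prefixSwap (firstExcess p.1 p.2) p.1 p.2, prefixSwap (firstExcess p.1 p.2) p.2 p.1)

variable {p : Finset (Fin m) × Finset (Fin m)}

lemma not_dominated_reflect (h : ¬ Dominated p.1 p.2) :
    ¬ Dominated (reflect p).2 (reflect p).1 :=
  fun hdom => (hdom (firstExcess p.1 p.2)).not_gt <| by
    simp only [reflect, countLT_prefixSwap_of_le _ _ _ le_rfl]
    exact countLT_lt_countLT_firstExcess h

lemma reflect_swap_reflect (h : ¬ Dominated p.1 p.2) : (reflect (reflect p).swap).swap = p := by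
  simp only [reflect, firstExcess_prefixSwap h, prefixSwap_prefixSwap, Prod.swap_prod_mk]

lemma card_reflect (h : ¬ Dominated p.1 p.2) :
    #(reflect p).1 + 1 = #p.1 ∧ #(reflect p).2 = #p.2 + 1 := by
  have h1 := card_prefixSwap_add (firstExcess p.1 p.2) p.1 p.2
  have h2 := card_prefixSwap_add (firstExcess p.1 p.2) p.2 p.1
  have h3 := countLT_firstExcess h
  simp only [reflect]
  omega

open scoped Classical in
lemma card_not_dominated (m j : ℕ) :
    #{p ∈ subsetPairs m (j + 1) (j + 1) | ¬ Dominated p.1 p.2} = #(subsetPairs m j (j + 2)) := by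
  have hswap : ∀ q ∈ subsetPairs m j (j + 2), ¬ Dominated q.swap.1 q.swap.2 := fun q hq =>
    not_dominated_of_card_lt (by simp only [mem_subsetPairs] at hq; simp; omega)
  refine card_nbij' reflect (fun q => (reflect q.swap).swap) (fun p hp => ?_) (fun q hq => ?_)
    (fun p hp => reflect_swap_reflect (mem_filter.1 hp).2) (fun q hq => ?_)
  · simp only [coe_filter, mem_subsetPairs, Set.mem_ofPred_eq, mem_coe] at hp ⊢
    have := card_reflect hp.2
    omega
  · have hdom := hswap q hq
    have := card_reflect hdom
    simp only [mem_coe, mem_subsetPairs] at hq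
    simp only [coe_filter, mem_subsetPairs, Set.mem_ofPred_eq, Prod.fst_swap,
      Prod.snd_swap] at this ⊢
    exact ⟨⟨by omega, by omega⟩, not_dominated_reflect hdom⟩
  · simpa using congrArg Prod.swap (reflect_swap_reflect (hswap q hq))

open scoped Classical in
theorem card_dominated_add (m j : ℕ) :
    #{p ∈ subsetPairs m (j + 1) (j + 1) | Dominated p.1 p.2} + m.choose j * m.choose (j + 2) =
      m.choose (j + 1) ^ 2 := by
  rw [← card_subsetPairs, ← card_not_dominated, card_filter_add_card_filter_not,
    card_subsetPairs, sq]

open scoped Classical in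
lemma card_dominated_zero (m : ℕ) : #{p ∈ subsetPairs m 0 0 | Dominated p.1 p.2} = 1 := by
  rw [filter_true_of_mem fun p hp t => by simp_all [countLT], card_subsetPairs]
  simp

end Reflection

section LRMaxima

variable {n : ℕ}

open scoped Classical in
noncomputable def lrMaxima (π : Equiv.Perm (Fin n)) : Finset (Fin n) := {i | IsLRMax π i}

variable {π : Equiv.Perm (Fin n)} {i : Fin n}

@[simp] lemma mem_lrMaxima : i ∈ lrMaxima π ↔ IsLRMax π i := by simp [lrMaxima]

lemma IsLRMax.le_apply (h : IsLRMax π i) : i ≤ π i := by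
  have hsub : (Iio i).image π ⊆ Iio (π i) := by
    intro y hy
    obtain ⟨j, hj, rfl⟩ := mem_image.1 hy
    exact mem_Iio.2 (h j (mem_Iio.1 hj))
  have := card_le_card hsub
  rwa [card_image_of_injective _ π.injective, Fin.card_Iio, Fin.card_Iio] at this

lemma exists_isLRMax_le_le_apply (s : Fin n) : ∃ q ≤ s, IsLRMax π q ∧ s ≤ π q := by
  obtain ⟨q, hq, hmax⟩ := exists_max_image (Iic s) π ⟨s, mem_Iic.2 le_rfl⟩
  refine ⟨q, mem_Iic.1 hq, fun j hj => ?_, ?_⟩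
  · exact (hmax j (mem_Iic.2 (hj.le.trans (mem_Iic.1 hq)))).lt_of_ne (π.injective.ne hj.ne)
  · have hsub : (Iic s).image π ⊆ Iic (π q) := fun y hy => by
      obtain ⟨j, hj, rfl⟩ := mem_image.1 hy
      exact mem_Iic.2 (hmax j hj)
    have := card_le_card hsub
    rw [card_image_of_injective _ π.injective, Fin.card_Iic, Fin.card_Iic] at this
    exact Fin.le_def.2 (by omega)

lemma strictMonoOn_lrMaxima (π : Equiv.Perm (Fin n)) : StrictMonoOn π (lrMaxima π) :=
  fun _ _ _ hj hij => (mem_lrMaxima.1 hj) _ hij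

lemma exists_lt_apply_of_not_isLRMax (h : ¬ IsLRMax π i) : ∃ l < i, π i < π l := by
  simp only [IsLRMax, not_forall, not_lt, exists_prop] at h
  obtain ⟨l, hli, hle⟩ := h
  exact ⟨l, hli, hle.lt_of_ne (π.injective.ne hli.ne')⟩

lemma avoids321_iff_strictMonoOn_compl_lrMaxima :
    Avoids321 π ↔ StrictMonoOn π ↑(lrMaxima π)ᶜ := by
  simp only [coe_compl, Set.mem_compl_iff, mem_coe, mem_lrMaxima, StrictMonoOn]
  constructor
  · intro h321 i hi j hj hij
    obtain ⟨l, hli, hil⟩ := exists_lt_apply_of_not_isLRMax hi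
    exact (lt_or_gt_of_ne (π.injective.ne hij.ne)).resolve_right fun hji =>
      h321 ⟨l, i, j, hli, hij, hji, hil⟩
  · rintro hmono ⟨i, j, k, hij, hjk, hkj, hji⟩
    exact (hmono (fun h => (h i hij).not_gt hji) (fun h => (h j hjk).not_gt hkj) hjk).not_gt hkj

lemma eq_increasingPerm_of_avoids321 (hπ : Avoids321 π) {P V : Finset (Fin n)}
    (hP : lrMaxima π = P) (hV : (lrMaxima π).image π = V) (h : #P = #V) :
    π = increasingPerm P V h := by
  subst hP hV
  exact eq_increasingPerm (fun x => π.injective.mem_finset_image) (strictMonoOn_lrMaxima π)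
    (avoids321_iff_strictMonoOn_compl_lrMaxima.1 hπ)

end LRMaxima

section Admissible

variable {n : ℕ}

def Admissible (P V : Finset (Fin n)) : Prop := ∀ s < n, countLT V s < countLT P (s + 1)

lemma admissible_lrMaxima (π : Equiv.Perm (Fin n)) :
    Admissible (lrMaxima π) ((lrMaxima π).image π) := by
  intro s hs
  obtain ⟨q, hqs, hq, hsq⟩ := exists_isLRMax_le_le_apply (π := π) ⟨s, hs⟩
  rw [countLT_image, countLT]
  refine card_lt_card ((ssubset_iff_of_subset fun i hi => ?_).2 ⟨q, ?_, ?_⟩)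
  · obtain ⟨hi, his⟩ := mem_filter.1 hi
    have := Fin.le_def.1 (IsLRMax.le_apply (mem_lrMaxima.1 hi))
    exact mem_filter.2 ⟨hi, by omega⟩
  · exact mem_filter.2 ⟨mem_lrMaxima.2 hq, Nat.lt_succ_of_le hqs⟩
  · simpa using fun _ => Fin.le_def.1 hsq

variable {P V : Finset (Fin n)} {h : #P = #V} {x : Fin n}

lemma countLT_increasingPerm_of_mem (hx : x ∈ P) :
    countLT V (increasingPerm P V h x) = countLT P x :=
  countLT_apply_of_image_eq strictMonoOn_increasingPerm image_increasingPerm hx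

lemma countLT_compl_increasingPerm_of_notMem (hx : x ∉ P) :
    countLT Vᶜ (increasingPerm P V h x) = countLT Pᶜ x :=
  countLT_apply_of_image_eq strictMonoOn_compl_increasingPerm image_compl_increasingPerm
    (mem_compl.2 hx)

lemma le_increasingPerm_of_mem (hadm : Admissible P V) (hx : x ∈ P) :
    x ≤ increasingPerm P V h x := by
  have := hadm _ (increasingPerm P V h x).isLt
  rw [countLT_increasingPerm_of_mem hx, countLT_lt_countLT_iff hx] at this
  exact Fin.le_def.2 (by omega)

lemma isLRMax_increasingPerm_of_mem (hadm : Admissible P V) (hx : x ∈ P) :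
    IsLRMax (increasingPerm P V h) x := by
  intro j hjx
  by_cases hj : j ∈ P
  · exact strictMonoOn_increasingPerm hj hx hjx
  have hψj : increasingPerm P V h j ∈ Vᶜ := mem_compl.2 ((increasingPerm_mem_iff j).not.2 hj)
  -- compare ranks in `Vᶜ`: ranks in `P` and `V` agree, and `x` is at most its image
  rw [Fin.lt_def, ← countLT_lt_countLT_iff hψj, countLT_compl_increasingPerm_of_notMem hj]
  have := (countLT_lt_countLT_iff (mem_compl.2 hj) x).2 hjx
  have := countLT_add_countLT_compl P x.isLt.le
  have := countLT_add_countLT_compl V (increasingPerm P V h x).isLt.le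
  have := countLT_increasingPerm_of_mem (h := h) hx
  have := Fin.le_def.1 (le_increasingPerm_of_mem (h := h) hadm hx)
  omega

lemma not_isLRMax_increasingPerm_of_notMem (hadm : Admissible P V) (hx : x ∉ P) :
    ¬ IsLRMax (increasingPerm P V h) x := by
  intro hmax
  have hadm_x := hadm x x.isLt
  rw [countLT_succ_of_notMem hx] at hadm_x
  -- `j` is the last position of `P` before `x`; its value already exceeds that of `x`.
  obtain ⟨j, hjP, hjx, hcount⟩ := exists_countLT_eq_countLT_add_one (S := P) (t := x) (by omega)
  have hψj : (x : ℕ) ≤ increasingPerm P V h j := by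
    have hψjV : increasingPerm P V h j ∈ V := (increasingPerm_mem_iff j).2 hjP
    rw [← not_lt, ← countLT_lt_countLT_iff hψjV, countLT_increasingPerm_of_mem hjP]
    omega
  have hψx : increasingPerm P V h x ∈ Vᶜ := mem_compl.2 ((increasingPerm_mem_iff x).not.2 hx)
  refine (hmax j hjx).not_gt ?_
  rw [Fin.lt_def, ← countLT_lt_countLT_iff hψx, countLT_compl_increasingPerm_of_notMem hx]
  have := countLT_add_countLT_compl P x.isLt.le
  have := countLT_add_countLT_compl V (increasingPerm P V h j).isLt.le
  have := countLT_increasingPerm_of_mem (h := h) hjP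
  omega

lemma lrMaxima_increasingPerm (hadm : Admissible P V) : lrMaxima (increasingPerm P V h) = P := by
  ext x
  rw [mem_lrMaxima]
  exact ⟨fun hmax => not_not.1 fun hx => not_isLRMax_increasingPerm_of_notMem hadm hx hmax,
    isLRMax_increasingPerm_of_mem hadm⟩

lemma avoids321_increasingPerm (hadm : Admissible P V) : Avoids321 (increasingPerm P V h) := by
  rw [avoids321_iff_strictMonoOn_compl_lrMaxima, lrMaxima_increasingPerm hadm]
  exact strictMonoOn_compl_increasingPerm

end Admissible

open scoped Classical in
theorem card_avoids321_eq_card_admissible (n k : ℕ) :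
    #{π : Equiv.Perm (Fin n) | Avoids321 π ∧ #(lrMaxima π) = k} =
      #{p ∈ subsetPairs n k k | Admissible p.1 p.2} := by
  refine card_nbij (fun π => (lrMaxima π, (lrMaxima π).image π)) ?_ ?_ ?_
  · intro π hπ
    simp only [coe_filter, mem_univ, true_and, Set.mem_ofPred_eq, mem_subsetPairs] at hπ ⊢
    rw [card_image_of_injective _ π.injective]
    exact ⟨⟨hπ.2, hπ.2⟩, admissible_lrMaxima π⟩
  · intro π hπ σ hσ hπσ
    simp only [coe_filter, mem_univ, true_and, Set.mem_ofPred_eq, Prod.mk.injEq] at hπ hσ hπσ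
    have h : #(lrMaxima σ) = #((lrMaxima σ).image σ) :=
      (card_image_of_injective _ σ.injective).symm
    exact (eq_increasingPerm_of_avoids321 hπ.1 hπσ.1 hπσ.2 h).trans
      (eq_increasingPerm_of_avoids321 hσ.1 rfl rfl h).symm
  · rintro ⟨P, V⟩ hPV
    simp only [coe_filter, mem_subsetPairs, Set.mem_ofPred_eq] at hPV
    obtain ⟨⟨hP, hV⟩, hadm⟩ := hPV
    have h : #P = #V := hP.trans hV.symm
    refine ⟨increasingPerm P V h, ?_, ?_⟩
    · simp only [coe_filter, mem_univ, true_and, Set.mem_ofPred_eq]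
      exact ⟨avoids321_increasingPerm hadm, by rw [lrMaxima_increasingPerm hadm, hP]⟩
    · simp only [lrMaxima_increasingPerm hadm, image_increasingPerm]

section Reduction

variable {m : ℕ}

def padPair (q : Finset (Fin m) × Finset (Fin m)) :
    Finset (Fin (m + 1)) × Finset (Fin (m + 1)) :=
  (insert 0 (q.2.map (Fin.succEmb m)), insert (Fin.last m) (q.1.map Fin.castSuccEmb))

noncomputable def trimPair (p : Finset (Fin (m + 1)) × Finset (Fin (m + 1))) :
    Finset (Fin m) × Finset (Fin m) :=
  (p.2.preimage Fin.castSucc (Fin.castSucc_injective m).injOn,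
    p.1.preimage Fin.succ (Fin.succ_injective m).injOn)

lemma trimPair_padPair (q : Finset (Fin m) × Finset (Fin m)) : trimPair (padPair q) = q := by
  ext x <;> simp [trimPair, padPair]

lemma padPair_trimPair {p : Finset (Fin (m + 1)) × Finset (Fin (m + 1))} (h0 : 0 ∈ p.1)
    (hlast : Fin.last m ∈ p.2) : padPair (trimPair p) = p := by
  ext x
  · cases x using Fin.cases <;> simp [padPair, trimPair, h0, Fin.succ_ne_zero]
  · cases x using Fin.lastCases <;> simp [padPair, trimPair, hlast, Fin.castSucc_ne_last]

lemma card_padPair (q : Finset (Fin m) × Finset (Fin m)) :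
    #(padPair q).1 = #q.2 + 1 ∧ #(padPair q).2 = #q.1 + 1 := by
  simp [padPair, card_insert_of_notMem, Fin.succ_ne_zero, Fin.castSucc_ne_last]

lemma countLT_padPair_fst (q : Finset (Fin m) × Finset (Fin m)) (t : ℕ) :
    countLT (padPair q).1 (t + 1) = countLT q.2 t + 1 := by
  rw [padPair, countLT_insert_of_lt (by simp [Fin.succ_ne_zero]) (by simp), countLT_map_succEmb]

lemma countLT_padPair_snd (q : Finset (Fin m) × Finset (Fin m)) {t : ℕ} (ht : t ≤ m) :
    countLT (padPair q).2 t = countLT q.1 t := by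
  rw [padPair, countLT_insert_of_le _ (by simpa using ht), countLT_map_castSuccEmb]

lemma admissible_padPair_iff {q : Finset (Fin m) × Finset (Fin m)} (h : #q.1 = #q.2) :
    Admissible (padPair q).1 (padPair q).2 ↔ Dominated q.1 q.2 := by
  refine ⟨fun hadm t => ?_, fun hdom s hs => ?_⟩
  · rcases lt_or_ge t m with htm | htm
    · have := hadm t (by omega)
      rw [countLT_padPair_fst, countLT_padPair_snd _ htm.le] at this
      omega
    · rw [countLT_of_le _ htm, countLT_of_le _ htm, h]
  · rw [countLT_padPair_fst, countLT_padPair_snd _ (by omega)]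
    exact Nat.lt_succ_of_le (hdom s)

variable {P V : Finset (Fin (m + 1))}

lemma zero_mem_of_admissible (hadm : Admissible P V) : 0 ∈ P := by
  obtain ⟨j, hjP, hj, -⟩ :=
    exists_countLT_eq_countLT_add_one ((Nat.zero_le _).trans_lt (hadm 0 (Nat.succ_pos m)))
  rwa [show j = 0 from Fin.ext (by rw [Fin.val_zero]; omega)] at hjP

lemma last_mem_of_admissible (hadm : Admissible P V) (h : #P = #V) : Fin.last m ∈ V := by
  by_contra hV
  have := hadm m (Nat.lt_succ_self m)
  rw [countLT_of_le P le_rfl, h, countLT, filter_true_of_mem fun x hx =>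
    Fin.val_lt_last (ne_of_mem_of_not_mem hx hV)] at this
  exact this.false

lemma padPair_trimPair_of_admissible (hadm : Admissible P V) (h : #P = #V) :
    padPair (trimPair (P, V)) = (P, V) :=
  padPair_trimPair (zero_mem_of_admissible hadm) (last_mem_of_admissible hadm h)

open scoped Classical in
theorem card_admissible_eq_card_dominated (m k : ℕ) :
    #{p ∈ subsetPairs (m + 1) (k + 1) (k + 1) | Admissible p.1 p.2} =
      #{q ∈ subsetPairs m k k | Dominated q.1 q.2} := by
  refine card_nbij' trimPair padPair (fun p hp => ?_) (fun q hq => ?_) (fun p hp => ?_)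
    (fun q _ => trimPair_padPair q)
  · obtain ⟨P, V⟩ := p
    simp only [coe_filter, mem_subsetPairs, Set.mem_ofPred_eq] at hp ⊢
    obtain ⟨⟨hP, hV⟩, hadm⟩ := hp
    have hpad := padPair_trimPair_of_admissible hadm (hP.trans hV.symm)
    have hcard := card_padPair (trimPair (P, V))
    have hadm' : Admissible (padPair (trimPair (P, V))).1 (padPair (trimPair (P, V))).2 := by
      rwa [hpad]
    rw [hpad] at hcard
    dsimp only at hcard
    exact ⟨⟨by omega, by omega⟩, (admissible_padPair_iff (by omega)).1 hadm'⟩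
  · simp only [coe_filter, mem_subsetPairs, Set.mem_ofPred_eq] at hq ⊢
    have hcard := card_padPair q
    exact ⟨⟨by omega, by omega⟩, (admissible_padPair_iff (by omega)).2 hq.2⟩
  · obtain ⟨P, V⟩ := p
    simp only [coe_filter, mem_subsetPairs, Set.mem_ofPred_eq] at hp
    exact padPair_trimPair_of_admissible hp.2 (hp.1.1.trans hp.1.2.symm)

end Reduction

lemma succ_mul_choose_sq (m i : ℕ) :
    (m + 1) * m.choose (i + 1) ^ 2 =
      (m + 1).choose (i + 2) * (m + 1).choose (i + 1) +
        (m + 1) * (m.choose i * m.choose (i + 2)) := by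
  rcases lt_or_ge m (i + 1) with hm | hm
  · simp [Nat.choose_eq_zero_of_lt hm, Nat.choose_eq_zero_of_lt (show m + 1 < i + 2 by omega),
      Nat.choose_eq_zero_of_lt (show m < i + 2 by omega)]
  obtain ⟨d, rfl⟩ : ∃ d, m = i + 1 + d := ⟨m - (i + 1), by omega⟩
  have h1 := Nat.add_one_mul_choose_eq (i + 1 + d) (i + 1)
  have h2 := Nat.add_one_mul_choose_eq (i + 1 + d) i
  have h3 := Nat.choose_succ_right_eq (i + 1 + d) (i + 1)
  have h4 := Nat.choose_succ_right_eq (i + 1 + d) i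
  rw [show i + 1 + d - (i + 1) = d by omega] at h3
  rw [show i + 1 + d - i = d + 1 by omega] at h4
  apply Nat.eq_of_mul_eq_mul_left (show 0 < (i + 1) * (i + 2) by positivity)
  zify at h1 h2 h3 h4 ⊢
  linear_combination (i + 1 + d + 1 : ℤ) * ((i + 1 + d).choose i : ℤ) * h1
    + ((i + 1 + d + 1).choose (i + 2) : ℤ) * (i + 2) * h2
    - (i + 1 + d + 1 : ℤ) * (i + 1) * ((i + 1 + d).choose i : ℤ) * h3
    + (i + 1 + d + 1 : ℤ) * (i + 2) * ((i + 1 + d).choose (i + 1) : ℤ) * h4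

end Narayana

open Narayana in
open scoped Classical in
theorem card_avoids321_with_k_lr_maxima_general (n k : ℕ) (hk : 1 ≤ k) :
    n * Nat.card {π : Equiv.Perm (Fin n) //
        Avoids321 π ∧ Nat.card {i : Fin n // IsLRMax π i} = k} =
      Nat.choose n k * Nat.choose n (k - 1) := by
  obtain ⟨j, rfl⟩ : ∃ j, k = j + 1 := ⟨k - 1, by omega⟩
  cases n with
  | zero => simp
  | succ m =>
  have hcard : Nat.card {π : Equiv.Perm (Fin (m + 1)) //
      Avoids321 π ∧ Nat.card {i : Fin (m + 1) // IsLRMax π i} = j + 1} =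
        #{p ∈ subsetPairs m j j | Dominated p.1 p.2} := by
    rw [← card_admissible_eq_card_dominated, ← card_avoids321_eq_card_admissible,
      Nat.card_eq_fintype_card, Fintype.card_subtype]
    simp only [Nat.card_eq_fintype_card, Fintype.card_subtype, lrMaxima]
    congr
  rw [hcard, Nat.add_sub_cancel]
  cases j with
  | zero => simp [card_dominated_zero]
  | succ i =>
    apply Nat.add_right_cancel (m := (m + 1) * (m.choose i * m.choose (i + 2)))
    rw [← mul_add, card_dominated_add, succ_mul_choose_sq]

/-- For `1 ≤ k ≤ n`, the number of 321-avoiding permutations of `{1,...,n}` with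
exactly `k` left-to-right maxima is the Narayana number `(1/n) C(n,k) C(n,k-1)`
(stated multiplied through by `n` to stay in the natural numbers). -/
theorem card_avoids321_with_k_lr_maxima (n k : ℕ) (hk : 1 ≤ k) (hkn : k ≤ n) :
    n * Nat.card {π : Equiv.Perm (Fin n) //
        Avoids321 π ∧ Nat.card {i : Fin n // IsLRMax π i} = k} =
      Nat.choose n k * Nat.choose n (k - 1) :=
  card_avoids321_with_k_lr_maxima_general n k hk
end

section
/- For every permutation π of {1,...,n} with n ≥ 1, there exists a unique absolutely irreducible permutation θ such that π is θ-decomposable. -/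
/-- `b : ℕ → ℕ` (used on `{0,...,k}`) gives a `θ`-decomposition of `π`:
`π` is cut into `k` nonempty consecutive blocks of positions
`[b i, b (i+1))`, each block's set of values is an interval of integers,
and the relative order of the blocks' value intervals agrees with `θ`. -/
structure IsDecomp {n k : ℕ} (π : Equiv.Perm (Fin n)) (θ : Equiv.Perm (Fin k))
    (b : ℕ → ℕ) : Prop where
  zero : b 0 = 0
  last : b k = n
  mono : ∀ i, i < k → b i < b (i + 1)
  interval : ∀ i, i < k → ∃ lo : ℕ, ∀ p : Fin n, b i ≤ (p : ℕ) → (p : ℕ) < b (i + 1) →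
    lo ≤ (π p : ℕ) ∧ (π p : ℕ) < lo + (b (i + 1) - b i)
  order : ∀ i j : Fin k, θ i < θ j → ∀ p q : Fin n,
    b (i : ℕ) ≤ (p : ℕ) → (p : ℕ) < b ((i : ℕ) + 1) →
    b (j : ℕ) ≤ (q : ℕ) → (q : ℕ) < b ((j : ℕ) + 1) → π p < π q

/-- `π` is `θ`-decomposable if some sequence of breakpoints realises a
`θ`-decomposition of `π`. -/
def Decomposable {n k : ℕ} (π : Equiv.Perm (Fin n)) (θ : Equiv.Perm (Fin k)) : Prop :=
  ∃ b : ℕ → ℕ, IsDecomp π θ b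

/-- The positions `[a, b)` form a block of `π`: a nonempty set of consecutive
positions whose values form an interval of integers. -/
def IsBlock {n : ℕ} (π : Equiv.Perm (Fin n)) (a b : ℕ) : Prop :=
  a < b ∧ b ≤ n ∧ ∃ lo : ℕ, ∀ p : Fin n, a ≤ (p : ℕ) → (p : ℕ) < b →
    lo ≤ (π p : ℕ) ∧ (π p : ℕ) < lo + (b - a)

/-- A proper block: a block which is not the whole of `π`. -/
def ProperBlock {n : ℕ} (π : Equiv.Perm (Fin n)) (a b : ℕ) : Prop :=
  IsBlock π a b ∧ ¬ (a = 0 ∧ b = n)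

/-- A permutation is absolutely irreducible (simple) if it has no proper block
consisting of at least two consecutive positions whose values form an interval. -/
def AbsIrred {n : ℕ} (π : Equiv.Perm (Fin n)) : Prop :=
  ¬ ∃ a b : ℕ, a + 2 ≤ b ∧ ProperBlock π a b

/-!
Existence: among all cuttings of `π` into `k ≥ 2` consecutive blocks take one with `k` minimal.
A proper block of its pattern `θ` with at least two entries would let us merge the corresponding
parts of `π` into fewer blocks, so `θ` is absolutely irreducible.

Uniqueness: for such a decomposition, a block of `π` that is not inside one part forms, together
with the parts through its two ends, an aligned block of parts, so it meets the first and the last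
part. If the parts of two decompositions are each inside a part of the other, the cut points
coincide and so do the patterns. Otherwise a part of one straddles the other, and this forces `π`
to be a direct or skew sum: a prefix block whose complement is a block. Then the first or the last
part of every decomposition contains the position of the value `0` or `n - 1`; the complement of
that part is an aligned block, which for an absolutely irreducible pattern forces `k = 2`. A
pattern of length `2` is read off by comparing the values at positions `0` and `n - 1`.
-/

open Set Equiv

variable {n : ℕ}

theorem Fin.card_filter_val_mem_Ico {a b : ℕ} (hb : b ≤ n) :
    (Finset.univ.filter fun p : Fin n => (p : ℕ) ∈ Ico a b).card = b - a := by
  rw [← Nat.card_Ico, ← Finset.card_attachFin (Finset.Ico a b)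
    fun m hm => (Finset.mem_Ico.1 hm).2.trans_le hb]
  congr 1
  ext p
  simp [Finset.mem_attachFin]

def IsExtremal (π : Perm (Fin n)) (e : Fin n) : Prop :=
  (∀ r, π e ≤ π r) ∨ ∀ r, π r ≤ π e

namespace IsBlock

variable {π : Perm (Fin n)} {a b c d : ℕ}

theorem mem_of_le_of_le (h : IsBlock π a b) {p q r : Fin n} (hp : (p : ℕ) ∈ Ico a b)
    (hq : (q : ℕ) ∈ Ico a b) (hpr : π p ≤ π r) (hrq : π r ≤ π q) : (r : ℕ) ∈ Ico a b := by
  obtain ⟨-, hbn, lo, hlo⟩ := h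
  set W := Finset.univ.filter fun p : Fin n => (p : ℕ) ∈ Ico a b
  have hvals : W.image (fun p => (π p : ℕ)) = Finset.Ico lo (lo + (b - a)) := by
    refine Finset.eq_of_subset_of_card_le (fun y hy => ?_) ?_
    · obtain ⟨p, hp, rfl⟩ := Finset.mem_image.1 hy
      exact Finset.mem_Ico.2 (hlo p (Finset.mem_filter.1 hp).2.1 (Finset.mem_filter.1 hp).2.2)
    · rw [Finset.card_image_of_injective (f := fun p => (π p : ℕ)) _
          (Fin.val_injective.comp π.injective),
        Fin.card_filter_val_mem_Ico hbn, Nat.card_Ico]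
      omega
  have hr : (π r : ℕ) ∈ W.image (fun p => (π p : ℕ)) := by
    rw [hvals, Finset.mem_Ico]
    have := hlo p hp.1 hp.2
    have := hlo q hq.1 hq.2
    have : (π p : ℕ) ≤ π r := hpr
    have : (π r : ℕ) ≤ π q := hrq
    omega
  obtain ⟨r', hr', hrr'⟩ := Finset.mem_image.1 hr
  rw [← π.injective (Fin.val_injective hrr')]
  exact (Finset.mem_filter.1 hr').2

theorem of_mem_of_le_of_le (hab : a < b) (hbn : b ≤ n)
    (h : ∀ p q r : Fin n, (p : ℕ) ∈ Ico a b → (q : ℕ) ∈ Ico a b → π p ≤ π r → π r ≤ π q →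
      (r : ℕ) ∈ Ico a b) : IsBlock π a b := by
  set W := Finset.univ.filter fun p : Fin n => (p : ℕ) ∈ Ico a b
  have hW : W.Nonempty := ⟨⟨a, by omega⟩, by simp [W, hab]⟩
  obtain ⟨p₀, hp₀, hmin⟩ := W.exists_min_image (fun p => (π p : ℕ)) hW
  refine ⟨hab, hbn, π p₀, fun p hpa hpb => ⟨hmin p (by simp [W, hpa, hpb]), ?_⟩⟩
  by_contra! hbig
  -- every value from the least one up to `π p` is taken in the block: more than `b - a` values
  have hsub : Finset.Icc (π p₀ : ℕ) (π p) ⊆ W.image (fun p => (π p : ℕ)) := by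
    intro y hy
    obtain ⟨hy₁, hy₂⟩ := Finset.mem_Icc.1 hy
    have hyn : y < n := hy₂.trans_lt (π p).isLt
    refine Finset.mem_image.2 ⟨π.symm ⟨y, hyn⟩, ?_, by simp⟩
    refine Finset.mem_filter.2 ⟨Finset.mem_univ _, h p₀ p _ (Finset.mem_filter.1 hp₀).2
      ⟨hpa, hpb⟩ ?_ ?_⟩ <;> simpa [Fin.le_def]
  have := (Finset.card_le_card hsub).trans Finset.card_image_le
  rw [Nat.card_Icc, Fin.card_filter_val_mem_Ico hbn] at this
  omega

theorem union (h₁ : IsBlock π a b) (h₂ : IsBlock π c d) (hac : a ≤ c) (hcb : c < b)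
    (hbd : b ≤ d) : IsBlock π a d := by
  have hcn : c < n := hcb.trans_le (hbd.trans h₂.2.1)
  set m : Fin n := ⟨c, hcn⟩
  have hshare : ∀ x : Fin n, (x : ℕ) ∈ Ico a d →
      ((x : ℕ) ∈ Ico a b ∧ (m : ℕ) ∈ Ico a b) ∨ ((x : ℕ) ∈ Ico c d ∧ (m : ℕ) ∈ Ico c d) := by
    intro x hx
    simp only [mem_Ico, m] at hx ⊢
    omega
  have hsub : ∀ x : ℕ, x ∈ Ico a b ∪ Ico c d → x ∈ Ico a d := by
    intro x hx
    simp only [mem_union, mem_Ico] at hx ⊢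
    omega
  refine of_mem_of_le_of_le (by omega) h₂.2.1 fun p q r hp hq hpr hrq => hsub _ ?_
  -- position `c` lies in both blocks: comparing `π r` with `π m` tells which block catches `r`
  rcases le_total (π r) (π m) with hrm | hmr
  · rcases hshare p hp with ⟨hp, hm⟩ | ⟨hp, hm⟩
    · exact Or.inl (h₁.mem_of_le_of_le hp hm hpr hrm)
    · exact Or.inr (h₂.mem_of_le_of_le hp hm hpr hrm)
  · rcases hshare q hq with ⟨hq, hm⟩ | ⟨hq, hm⟩
    · exact Or.inl (h₁.mem_of_le_of_le hm hq hmr hrq)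
    · exact Or.inr (h₂.mem_of_le_of_le hm hq hmr hrq)

theorem lt_of_lt (h₁ : IsBlock π a b) (h₂ : IsBlock π c d) (hdisj : Disjoint (Ico a b) (Ico c d))
    {p p' q q' : Fin n} (hp : (p : ℕ) ∈ Ico a b) (hp' : (p' : ℕ) ∈ Ico a b)
    (hq : (q : ℕ) ∈ Ico c d) (hq' : (q' : ℕ) ∈ Ico c d) (hpq : π p < π q) : π p' < π q' := by
  by_contra! hqp
  rcases le_total (π q) (π p') with hqp' | hpq'
  · exact disjoint_left.1 hdisj (h₁.mem_of_le_of_le hp hp' hpq.le hqp') hq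
  · exact disjoint_left.1 hdisj hp' (h₂.mem_of_le_of_le hq' hq hqp hpq')

theorem exists_isExtremal_mem (h : IsBlock π a b) (hproper : ¬(a = 0 ∧ b = n))
    (hcover : ∀ r : Fin n, (r : ℕ) ∈ Ico c d ∨ (r : ℕ) ∈ Ico a b) :
    ∃ e : Fin n, (e : ℕ) ∈ Ico c d ∧ IsExtremal π e := by
  have hn : 0 < n := (Nat.zero_le a).trans_lt (h.1.trans_le h.2.1)
  set lo := π.symm ⟨0, hn⟩
  set hi := π.symm ⟨n - 1, by omega⟩
  have hlo : ∀ r, π lo ≤ π r := fun r => by simp [lo, Fin.le_def]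
  have hhi : ∀ r, π r ≤ π hi := fun r => by simp [hi, Fin.le_def]; omega
  by_contra! hno
  have hlo_mem := (hcover lo).resolve_left fun hc => hno lo hc (Or.inl hlo)
  have hhi_mem := (hcover hi).resolve_left fun hc => hno hi hc (Or.inr hhi)
  have h₀ := h.mem_of_le_of_le (r := ⟨0, hn⟩) hlo_mem hhi_mem (hlo _) (hhi _)
  have h₁ := h.mem_of_le_of_le (r := ⟨n - 1, by omega⟩) hlo_mem hhi_mem (hlo _) (hhi _)
  simp only [mem_Ico] at h₀ h₁
  exact hproper ⟨by omega, by have := h.2.1; omega⟩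

theorem of_compl (h : IsBlock π a b) {e : Fin n} (he : (e : ℕ) ∈ Ico a b) (hext : IsExtremal π e)
    (hcd : c < d) (hdn : d ≤ n) (hcompl : ∀ r : Fin n, (r : ℕ) ∈ Ico c d ↔ (r : ℕ) ∉ Ico a b) :
    IsBlock π c d := by
  refine of_mem_of_le_of_le hcd hdn fun p q r hp hq hpr hrq => (hcompl r).2 fun hr => ?_
  rcases hext with hmin | hmax
  · exact (hcompl p).1 hp (h.mem_of_le_of_le he hr (hmin p) hpr)
  · exact (hcompl q).1 hq (h.mem_of_le_of_le hr he hrq (hmax q))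

end IsBlock

theorem isBlock_singleton (π : Perm (Fin n)) {i : ℕ} (hi : i < n) : IsBlock π i (i + 1) := by
  refine IsBlock.of_mem_of_le_of_le (by omega) hi fun p q r hp hq hpr hrq => ?_
  have hpq : p = q := Fin.ext (by simp only [mem_Ico] at hp hq; omega)
  subst hpq
  rwa [π.injective (le_antisymm hrq hpr)]

theorem exists_perm_lt_iff_lt {α : Type*} [LinearOrder α] {k : ℕ} (f : Fin k → α)
    (hf : Function.Injective f) : ∃ θ : Perm (Fin k), ∀ i j, θ i < θ j ↔ f i < f j := by
  set σ := Tuple.sort f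
  have hσ : StrictMono (f ∘ σ) :=
    (Tuple.monotone_sort f).strictMono_of_injective (hf.comp σ.injective)
  exact ⟨σ.symm, fun i j => by simpa using (hσ.lt_iff_lt (a := σ.symm i) (b := σ.symm j)).symm⟩

structure IsBlockPartition (π : Perm (Fin n)) (k : ℕ) (b : ℕ → ℕ) : Prop where
  zero : b 0 = 0
  last : b k = n
  isBlock : ∀ i < k, IsBlock π (b i) (b (i + 1))

theorem isBlockPartition_singletons (π : Perm (Fin n)) : IsBlockPartition π n fun i => i :=
  ⟨rfl, rfl, fun _ hi => isBlock_singleton π hi⟩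

namespace IsBlockPartition

variable {π : Perm (Fin n)} {k : ℕ} {b : ℕ → ℕ}

theorem strictMonoOn (hP : IsBlockPartition π k b) : StrictMonoOn b (Iic k) :=
  strictMonoOn_Iic_of_lt_succ fun i hi => (hP.isBlock i hi).1

theorem le_iff_le (hP : IsBlockPartition π k b) {i j : ℕ} (hi : i ≤ k) (hj : j ≤ k) :
    b i ≤ b j ↔ i ≤ j :=
  hP.strictMonoOn.le_iff_le hi hj

theorem lt_iff_lt (hP : IsBlockPartition π k b) {i j : ℕ} (hi : i ≤ k) (hj : j ≤ k) :
    b i < b j ↔ i < j :=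
  hP.strictMonoOn.lt_iff_lt hi hj

theorem lt_last (hP : IsBlockPartition π k b) {i : ℕ} (hi : i < k) : b i < n :=
  hP.last ▸ (hP.lt_iff_lt hi.le le_rfl).2 hi

theorem length_le (hP : IsBlockPartition π k b) : k ≤ n := by
  have key : ∀ i ≤ k, i ≤ b i := by
    intro i
    induction i with
    | zero => simp
    | succ i ih => intro hi; have := (hP.isBlock i hi).1; have := ih (by omega); omega
  simpa [hP.last] using key k le_rfl

theorem length_pos (hP : IsBlockPartition π k b) (hn : 0 < n) : 0 < k :=
  Nat.pos_of_ne_zero fun hk => by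
    have := hP.last
    rw [hk, hP.zero] at this
    omega

theorem le_iff_of_mem (hP : IsBlockPartition π k b) {l x i : ℕ} (hl : l < k)
    (hx : x ∈ Ico (b l) (b (l + 1))) (hi : i ≤ k) : b i ≤ x ↔ i ≤ l := by
  refine ⟨fun h => ?_, fun h => ((hP.le_iff_le hi hl.le).2 h).trans hx.1⟩
  by_contra! hli
  have := (hP.le_iff_le (show l + 1 ≤ k by omega) hi).2 hli
  exact absurd (hx.2.trans_le this) (not_lt.2 h)

theorem mem_Ico_iff_of_mem (hP : IsBlockPartition π k b) {l x i j : ℕ} (hl : l < k)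
    (hx : x ∈ Ico (b l) (b (l + 1))) (hi : i ≤ k) (hj : j ≤ k) :
    x ∈ Ico (b i) (b j) ↔ l ∈ Ico i j := by
  simp only [mem_Ico, ← not_le, hP.le_iff_of_mem hl hx hi, hP.le_iff_of_mem hl hx hj]

theorem exists_mem (hP : IsBlockPartition π k b) {x : ℕ} (hx : x < n) :
    ∃ l : Fin k, x ∈ Ico (b l) (b (l + 1)) := by
  have hex : ∃ m, x < b m := ⟨k, hP.last ▸ hx⟩
  have hpos : Nat.find hex ≠ 0 := fun h => by
    have := Nat.find_spec hex; rw [h, hP.zero] at this; omega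
  have hk : Nat.find hex ≤ k := Nat.find_min' hex (hP.last ▸ hx)
  refine ⟨⟨Nat.find hex - 1, by omega⟩, ?_, ?_⟩
  · exact not_lt.1 (Nat.find_min hex (show Nat.find hex - 1 < Nat.find hex by omega))
  · simpa [Nat.sub_add_cancel (Nat.pos_of_ne_zero hpos)] using Nat.find_spec hex

theorem disjoint (hP : IsBlockPartition π k b) {i j : ℕ} (hi : i < k) (hj : j < k)
    (hij : i ≠ j) : Disjoint (Ico (b i) (b (i + 1))) (Ico (b j) (b (j + 1))) :=
  disjoint_left.2 fun _ hx hx' => hij <| by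
    have := (hP.mem_Ico_iff_of_mem hi hx hj.le hj).1 hx'
    simp only [mem_Ico] at this
    omega

theorem merge (hP : IsBlockPartition π k b) {i j : ℕ} (hij : i < j) (hjk : j ≤ k)
    (hB : IsBlock π (b i) (b j)) :
    IsBlockPartition π (k - (j - i) + 1) fun l => if l ≤ i then b l else b (l + (j - i) - 1) := by
  refine ⟨by simpa using hP.zero, ?_, fun l hl => ?_⟩
  · simp only [show ¬k - (j - i) + 1 ≤ i by omega, if_false]
    rw [show k - (j - i) + 1 + (j - i) - 1 = k by omega, hP.last]
  · rcases lt_trichotomy l i with hli | rfl | hil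
    · simpa [hli.le, Nat.succ_le_of_lt hli] using hP.isBlock l (by omega)
    · simpa [show l + 1 + (j - l) - 1 = j by omega] using hB
    · simp only [show ¬l ≤ i by omega, show ¬l + 1 ≤ i by omega, if_false]
      rw [show l + 1 + (j - i) - 1 = l + (j - i) - 1 + 1 by omega]
      exact hP.isBlock _ (by omega)

def start (hP : IsBlockPartition π k b) (i : Fin k) : Fin n :=
  ⟨b i, hP.lt_last i.isLt⟩

theorem start_mem (hP : IsBlockPartition π k b) (i : Fin k) :
    (hP.start i : ℕ) ∈ Ico (b i) (b (i + 1)) :=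
  ⟨le_rfl, (hP.isBlock i i.isLt).1⟩

theorem exists_isDecomp (hP : IsBlockPartition π k b) : ∃ θ : Perm (Fin k), IsDecomp π θ b := by
  obtain ⟨θ, hθ⟩ := exists_perm_lt_iff_lt (fun i => π (hP.start i)) fun i j h =>
    Fin.ext (hP.strictMonoOn.injOn i.isLt.le j.isLt.le (congrArg Fin.val (π.injective h)))
  refine ⟨θ, hP.zero, hP.last, fun i hi => (hP.isBlock i hi).1,
    fun i hi => (hP.isBlock i hi).2.2, fun i j hlt p q hp₁ hp₂ hq₁ hq₂ => ?_⟩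
  have hij : (i : ℕ) ≠ j := fun h => (Fin.ext h ▸ hlt).false
  exact (hP.isBlock i i.isLt).lt_of_lt (hP.isBlock j j.isLt) (hP.disjoint i.isLt j.isLt hij)
    (hP.start_mem i) ⟨hp₁, hp₂⟩ (hP.start_mem j) ⟨hq₁, hq₂⟩ ((hθ i j).1 hlt)

end IsBlockPartition

theorem StrictMonoOn.eq_of_parts_nested {k k' : ℕ} {b b' : ℕ → ℕ}
    (hb : StrictMonoOn b (Iic k)) (hb' : StrictMonoOn b' (Iic k')) (h₀ : b' 0 = b 0)
    (hlast : b' k' = b k) (h : ∀ j < k', ∃ i < k, b i ≤ b' j ∧ b' (j + 1) ≤ b (i + 1))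
    (h' : ∀ i < k, ∃ j < k', b' j ≤ b i ∧ b (i + 1) ≤ b' (j + 1)) :
    k' = k ∧ ∀ i ≤ k, b' i = b i := by
  have heq : ∀ m, m ≤ k → m ≤ k' → b' m = b m := by
    intro m
    induction m with
    | zero => exact fun _ _ => h₀
    | succ m ih =>
      intro hm hm'
      have hbm := ih (by omega) (by omega)
      obtain ⟨i, hi, hbi, hbi'⟩ := h m (by omega)
      obtain ⟨j, hj, hbj, hbj'⟩ := h' m (by omega)
      have him : i ≤ m := (hb.le_iff_le (mem_Iic.2 hi.le) (mem_Iic.2 (by omega))).1 (by omega)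
      have hjm : j ≤ m := (hb'.le_iff_le (mem_Iic.2 hj.le) (mem_Iic.2 (by omega))).1 (by omega)
      have := hb.monotoneOn (mem_Iic.2 (show i + 1 ≤ k by omega)) (mem_Iic.2 hm) (by omega)
      have := hb'.monotoneOn (mem_Iic.2 (show j + 1 ≤ k' by omega)) (mem_Iic.2 hm') (by omega)
      omega
  have hkk : k' = k := by
    by_contra hne
    rcases Nat.lt_or_gt_of_ne hne with hlt | hlt
    · have := hb.lt_iff_lt (mem_Iic.2 hlt.le) (mem_Iic.2 le_rfl)
      have := heq k' hlt.le le_rfl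
      omega
    · have := hb'.lt_iff_lt (mem_Iic.2 hlt.le) (mem_Iic.2 le_rfl)
      have := heq k le_rfl hlt.le
      omega
  exact ⟨hkk, fun i hi => heq i hi (hkk ▸ hi)⟩


namespace IsDecomp

variable {π : Perm (Fin n)} {k : ℕ} {θ : Perm (Fin k)} {b : ℕ → ℕ}

theorem isBlockPartition (hd : IsDecomp π θ b) : IsBlockPartition π k b := by
  have hb : StrictMonoOn b (Iic k) := strictMonoOn_Iic_of_lt_succ hd.mono
  refine ⟨hd.zero, hd.last, fun i hi => ⟨hd.mono i hi, ?_, hd.interval i hi⟩⟩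
  exact hd.last ▸ hb.monotoneOn (show i + 1 ∈ Iic k from hi) (mem_Iic.2 le_rfl) hi

theorem le_of_le (hd : IsDecomp π θ b) {i j : Fin k} {p q : Fin n}
    (hp : (p : ℕ) ∈ Ico (b i) (b (i + 1))) (hq : (q : ℕ) ∈ Ico (b j) (b (j + 1)))
    (h : π p ≤ π q) : θ i ≤ θ j :=
  le_of_not_gt fun hji => (hd.order j i hji q p hq.1 hq.2 hp.1 hp.2).not_ge h

theorem isBlock_iff (hd : IsDecomp π θ b) {i j : ℕ} (hij : i < j) (hjk : j ≤ k) :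
    IsBlock π (b i) (b j) ↔ IsBlock θ i j := by
  have hP := hd.isBlockPartition
  have hmem : ∀ (x : ℕ) (l : Fin k), x ∈ Ico (b l) (b (l + 1)) →
      (x ∈ Ico (b i) (b j) ↔ (l : ℕ) ∈ Ico i j) :=
    fun x l hx => hP.mem_Ico_iff_of_mem l.isLt hx (hij.le.trans hjk) hjk
  constructor
  · refine fun hB => IsBlock.of_mem_of_le_of_le hij hjk fun l₁ l₂ l hl₁ hl₂ h₁ h₂ => ?_
    rcases h₁.eq_or_lt with h₁ | h₁
    · rwa [← θ.injective h₁]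
    rcases h₂.eq_or_lt with h₂ | h₂
    · rwa [θ.injective h₂]
    have order : ∀ l l' : Fin k, θ l < θ l' → π (hP.start l) ≤ π (hP.start l') := fun l l' h =>
      (hd.order l l' h _ _ (hP.start_mem l).1 (hP.start_mem l).2
        (hP.start_mem l').1 (hP.start_mem l').2).le
    rw [← hmem _ _ (hP.start_mem l)]
    rw [← hmem _ _ (hP.start_mem l₁)] at hl₁
    rw [← hmem _ _ (hP.start_mem l₂)] at hl₂
    exact hB.mem_of_le_of_le hl₁ hl₂ (order _ _ h₁) (order _ _ h₂)
  · intro hB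
    refine IsBlock.of_mem_of_le_of_le ((hP.lt_iff_lt (hij.le.trans hjk) hjk).2 hij)
      (hP.last ▸ (hP.le_iff_le hjk le_rfl).2 hjk) fun p q r hp hq hpr hrq => ?_
    obtain ⟨lp, hlp⟩ := hP.exists_mem p.isLt
    obtain ⟨lq, hlq⟩ := hP.exists_mem q.isLt
    obtain ⟨l, hl⟩ := hP.exists_mem r.isLt
    rw [hmem _ _ hl]
    rw [hmem _ _ hlp] at hp
    rw [hmem _ _ hlq] at hq
    exact hB.mem_of_le_of_le hp hq (hd.le_of_le hlp hl hpr) (hd.le_of_le hl hlq hrq)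

theorem eq_succ_or_of_isBlock (hd : IsDecomp π θ b) (hθ : AbsIrred θ) {i j : ℕ} (hij : i < j)
    (hjk : j ≤ k) (hB : IsBlock π (b i) (b j)) : j = i + 1 ∨ i = 0 ∧ j = k := by
  by_contra! h
  exact hθ ⟨i, j, by omega, (hd.isBlock_iff hij hjk).1 hB, fun h' => h.2 h'.1 h'.2⟩


theorem subset_part_or_spans (hd : IsDecomp π θ b) (hθ : AbsIrred θ) {u v : ℕ}
    (hB : IsBlock π u v) : (∃ i < k, b i ≤ u ∧ v ≤ b (i + 1)) ∨ (u < b 1 ∧ b (k - 1) < v) := by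
  have hP := hd.isBlockPartition
  obtain ⟨huv, hvn, -⟩ := id hB
  obtain ⟨i, hi⟩ := hP.exists_mem (show u < n by omega)
  obtain ⟨j, hj⟩ := hP.exists_mem (show v - 1 < n by omega)
  rcases le_or_gt (j : ℕ) i with hji | hij
  · have := (hP.le_iff_le (i := j + 1) (j := i + 1) j.isLt i.isLt).2 (by omega)
    exact Or.inl ⟨i, i.isLt, hi.1, by have := hj.2; omega⟩
  have hbij := (hP.le_iff_le (show (i : ℕ) + 1 ≤ k from i.isLt) j.isLt.le).2 hij
  have h₁ : IsBlock π (b i) v :=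
    (hP.isBlock i i.isLt).union hB hi.1 hi.2 (by have := hj.1; omega)
  have h₂ : IsBlock π (b i) (b (j + 1)) :=
    h₁.union (hP.isBlock j j.isLt) ((hP.le_iff_le i.isLt.le j.isLt.le).2 hij.le)
      (by have := hj.1; omega) (by have := hj.2; omega)
  rcases hd.eq_succ_or_of_isBlock hθ (show (i : ℕ) < j + 1 by omega) j.isLt h₂
    with h | ⟨hi₀, hjk⟩
  · omega
  · have hu := hi.2
    rw [hi₀, zero_add] at hu
    exact Or.inr ⟨hu, by rw [show k - 1 = (j : ℕ) by omega]; have := hj.1; omega⟩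

theorem eq_two_of_isExtremal (hd : IsDecomp π θ b) (hθ : AbsIrred θ) (hk : 2 ≤ k) {e : Fin n}
    (he : IsExtremal π e) (hmem : (e : ℕ) < b 1 ∨ b (k - 1) ≤ e) : k = 2 := by
  have hP := hd.isBlockPartition
  have hb₁ := hP.lt_last (show 1 < k by omega)
  have hbk := (hP.lt_iff_lt (Nat.zero_le k) (show k - 1 ≤ k by omega)).2
    (show 0 < k - 1 by omega)
  rw [hP.zero] at hbk
  rcases hmem with he₀ | he₁
  · have hfirst := hP.isBlock 0 (by omega)
    rw [hP.zero, zero_add] at hfirst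
    have hrest : IsBlock π (b 1) (b k) := hP.last ▸ hfirst.of_compl ⟨Nat.zero_le _, he₀⟩ he hb₁
      le_rfl fun r => by simp only [mem_Ico]; have := r.isLt; omega
    rcases hd.eq_succ_or_of_isBlock hθ (by omega) le_rfl hrest with h | h <;> omega
  · have hlast := hP.isBlock (k - 1) (by omega)
    rw [Nat.sub_add_cancel (by omega), hP.last] at hlast
    have hinit : IsBlock π (b 0) (b (k - 1)) := by
      rw [hP.zero]
      exact hlast.of_compl ⟨he₁, e.isLt⟩ he hbk hlast.1.le fun r => by
        simp only [mem_Ico]; omega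
    rcases hd.eq_succ_or_of_isBlock hθ (by omega) (by omega) hinit with h | h <;> omega


theorem eq_two_of_split (hd : IsDecomp π θ b) (hθ : AbsIrred θ) (hk : 2 ≤ k) {c : ℕ}
    (h₁ : IsBlock π 0 c) (h₂ : IsBlock π c n) : k = 2 := by
  have hP := hd.isBlockPartition
  have hcover : ∀ r : Fin n, (r : ℕ) ∈ Ico 0 c ∨ (r : ℕ) ∈ Ico c n := fun r => by
    simp only [mem_Ico]; have := r.isLt; omega
  rcases hd.subset_part_or_spans hθ h₁ with ⟨i, hi, hbi, hci⟩ | ⟨-, hc⟩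
  · obtain ⟨e, he, hext⟩ := h₂.exists_isExtremal_mem (by have := h₁.1; omega) hcover
    have hi₀ : i = 0 := by
      by_contra hi₀
      have := (hP.lt_iff_lt (Nat.zero_le k) hi.le).2 (by omega)
      rw [hP.zero] at this
      omega
    subst hi₀
    rw [zero_add] at hci
    exact hd.eq_two_of_isExtremal hθ hk hext (Or.inl (by have := he.2; omega))
  · obtain ⟨e, he, hext⟩ := h₁.exists_isExtremal_mem (by have := h₂.1; omega)
      fun r => (hcover r).symm
    exact hd.eq_two_of_isExtremal hθ hk hext (Or.inr (by have := he.1; omega))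

theorem exists_split_of_not_subset (hd : IsDecomp π θ b) (hθ : AbsIrred θ) (hk : 2 ≤ k)
    {k' : ℕ} {θ' : Perm (Fin k')} {b' : ℕ → ℕ} (hd' : IsDecomp π θ' b') (hθ' : AbsIrred θ')
    (hk' : 2 ≤ k') {j : ℕ} (hj : j < k') (hnot : ¬∃ i < k, b i ≤ b' j ∧ b' (j + 1) ≤ b (i + 1)) :
    ∃ c, IsBlock π 0 c ∧ IsBlock π c n := by
  have hP := hd.isBlockPartition
  have hP' := hd'.isBlockPartition
  obtain ⟨hj₀, hj₁⟩ := (hd.subset_part_or_spans hθ (hP'.isBlock j hj)).resolve_left hnot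
  have hfirst : IsBlock π 0 (b 1) := by simpa [hP.zero] using hP.isBlock 0 (by omega)
  have hlast : IsBlock π (b (k - 1)) n := by
    simpa [Nat.sub_add_cancel (show 1 ≤ k by omega), hP.last] using hP.isBlock (k - 1) (by omega)
  have hb₁ := (hP.le_iff_le (show 1 ≤ k by omega) (show k - 1 ≤ k by omega)).2 (by omega)
  rcases Nat.eq_zero_or_pos j with rfl | hjpos
  · rw [zero_add] at hj₁
    have hB : IsBlock π 0 (b' 1) := by simpa [hP'.zero] using hP'.isBlock 0 (by omega)
    have hb' := hP'.lt_last (show 1 < k' by omega)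
    obtain ⟨e, he, hext⟩ := hlast.exists_isExtremal_mem (c := 0) (d := b' 1)
      (by have := hfirst.1; omega) fun r => by simp only [mem_Ico]; omega
    exact ⟨b' 1, hB, hB.of_compl he hext hb' le_rfl fun r => by
      simp only [mem_Ico]; have := r.isLt; omega⟩
  rcases (show j + 1 = k' ∨ j + 1 < k' by omega) with hjk | hjk
  · have hB : IsBlock π (b' j) n := by simpa [hjk, hP'.last] using hP'.isBlock j hj
    have hb' := (hP'.lt_iff_lt (Nat.zero_le _) hj.le).2 hjpos
    rw [hP'.zero] at hb'
    obtain ⟨e, he, hext⟩ := hfirst.exists_isExtremal_mem (c := b' j) (d := n)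
      (by have := hlast.1; omega) fun r => by simp only [mem_Ico]; have := r.isLt; omega
    exact ⟨b' j, hB.of_compl he hext hb' hB.1.le fun r => by simp only [mem_Ico]; omega, hB⟩
  · -- then the first part of `b` straddles `b'` as well, so it reaches beyond part `j`
    exfalso
    have hnot' : ¬∃ i < k', b' i ≤ 0 ∧ b 1 ≤ b' (i + 1) := by
      rintro ⟨i, hi, hi₀, hi₁⟩
      have := (hP'.le_iff_le (show i + 1 ≤ k' by omega) hj.le).2 (by
        by_contra hij
        have := (hP'.lt_iff_lt (Nat.zero_le _) hi.le).2 (show 0 < i by omega)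
        rw [hP'.zero] at this
        omega)
      omega
    obtain ⟨-, h⟩ := (hd'.subset_part_or_spans hθ' hfirst).resolve_left hnot'
    have := (hP'.le_iff_le (show j + 1 ≤ k' by omega) (show k' - 1 ≤ k' by omega)).2 (by omega)
    omega


theorem eq_of_forall_exists_mem (hd : IsDecomp π θ b) {θ' : Perm (Fin k)} {b' : ℕ → ℕ}
    (hd' : IsDecomp π θ' b')
    (h : ∀ i : Fin k, ∃ p : Fin n,
      (p : ℕ) ∈ Ico (b i) (b (i + 1)) ∧ (p : ℕ) ∈ Ico (b' i) (b' (i + 1))) :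
    θ' = θ := by
  choose p hp hp' using h
  have hlt : ∀ i j, θ i < θ j → θ' i < θ' j := fun i j hij =>
    (hd'.le_of_le (hp' i) (hp' j) (hd.order i j hij _ _ (hp i).1 (hp i).2 (hp j).1 (hp j).2).le
      ).lt_of_ne fun h => hij.ne (congrArg θ (θ'.injective h))
  have hmono : StrictMono (θ' ∘ θ.symm) := fun x y hxy => hlt _ _ (by simpa using hxy)
  have hid : θ' ∘ θ.symm = id :=
    (hmono.range_inj strictMono_id).1 <| by
      rw [range_id]; exact (θ.symm.trans θ').surjective.range_eq
  exact Equiv.ext fun i => by simpa using congrFun hid (θ i)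

theorem unique (hd : IsDecomp π θ b) (hθ : AbsIrred θ) (hk : 2 ≤ k) {k' : ℕ}
    {θ' : Perm (Fin k')} {b' : ℕ → ℕ} (hd' : IsDecomp π θ' b') (hθ' : AbsIrred θ')
    (hk' : 2 ≤ k') : k' = k ∧ HEq θ' θ := by
  have hP := hd.isBlockPartition
  have hP' := hd'.isBlockPartition
  by_cases hsplit : ∃ c, IsBlock π 0 c ∧ IsBlock π c n
  · obtain ⟨c, h₁, h₂⟩ := hsplit
    obtain rfl := hd.eq_two_of_split hθ hk h₁ h₂
    obtain rfl := hd'.eq_two_of_split hθ' hk' h₁ h₂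
    refine ⟨rfl, heq_of_eq (hd.eq_of_forall_exists_mem hd' fun i => ?_)⟩
    have h₀ := (hP.lt_iff_lt (Nat.zero_le 2) one_le_two).2 one_pos
    have h₀' := (hP'.lt_iff_lt (Nat.zero_le 2) one_le_two).2 one_pos
    have hb₁ := hP.lt_last one_lt_two
    have hb₁' := hP'.lt_last one_lt_two
    rw [hP.zero] at h₀
    rw [hP'.zero] at h₀'
    fin_cases i
    · refine ⟨⟨0, by omega⟩, ?_, ?_⟩ <;> simp [hP.zero, hP'.zero] <;> omega
    · refine ⟨⟨n - 1, by omega⟩, ?_, ?_⟩ <;> simp [hP.last, hP'.last] <;> omega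
  · obtain ⟨rfl, hbb⟩ := hP.strictMonoOn.eq_of_parts_nested
      hP'.strictMonoOn (by rw [hP.zero, hP'.zero]) (by rw [hP.last, hP'.last])
      (fun j hj => by_contra fun hnot =>
        hsplit (hd.exists_split_of_not_subset hθ hk hd' hθ' hk' hj hnot))
      (fun i hi => by_contra fun hnot =>
        hsplit (hd'.exists_split_of_not_subset hθ' hk' hd hθ hk hi hnot))
    refine ⟨rfl, heq_of_eq (hd.eq_of_forall_exists_mem hd' fun i =>
      ⟨hP.start i, hP.start_mem i, ?_⟩)⟩
    rw [hbb i i.isLt.le, hbb (i + 1) i.isLt]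
    exact hP.start_mem i

end IsDecomp

theorem exists_absIrred_isDecomp {π : Perm (Fin n)} (hn : 1 ≤ n) :
    ∃ (k : ℕ) (θ : Perm (Fin k)) (b : ℕ → ℕ),
      (2 ≤ k ∨ n = 1) ∧ AbsIrred θ ∧ IsDecomp π θ b := by
  classical
  have hex : ∃ k, (2 ≤ k ∨ n = 1) ∧ ∃ b, IsBlockPartition π k b :=
    ⟨n, by omega, _, isBlockPartition_singletons π⟩
  obtain ⟨hk, b, hP⟩ := Nat.find_spec hex
  obtain ⟨θ, hd⟩ := hP.exists_isDecomp
  refine ⟨_, θ, b, hk, ?_, hd⟩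
  rintro ⟨i, j, hij, hB, hproper⟩
  have hjk : j ≤ Nat.find hex := hB.2.1
  refine Nat.find_min hex (m := Nat.find hex - (j - i) + 1) (by omega)
    ⟨by omega, _, hP.merge (by omega) hjk ((hd.isBlock_iff (by omega) hjk).2 hB)⟩

/-- For every permutation `π` of `{1,...,n}` with `n ≥ 1` there is a unique
absolutely irreducible permutation `θ` such that `π` is `θ`-decomposable
(where, for `n ≥ 2`, the trivial one-block decomposition is not considered). -/
theorem exists_unique_absIrred_decomposition (n : ℕ) (hn : 1 ≤ n)
    (π : Equiv.Perm (Fin n)) :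
    ∃ (k : ℕ) (θ : Equiv.Perm (Fin k)), (2 ≤ k ∨ n = 1) ∧ AbsIrred θ ∧
      Decomposable π θ ∧
      ∀ (k' : ℕ) (θ' : Equiv.Perm (Fin k')), (2 ≤ k' ∨ n = 1) → AbsIrred θ' →
        Decomposable π θ' → k' = k ∧ HEq θ' θ := by
  obtain ⟨k, θ, b, hk, hθ, hd⟩ := exists_absIrred_isDecomp (π := π) hn
  refine ⟨k, θ, hk, hθ, ⟨b, hd⟩, fun k' θ' hk' hθ' ⟨b', hd'⟩ => ?_⟩
  rcases hn.eq_or_lt with rfl | hn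
  · have hP := hd.isBlockPartition
    have hP' := hd'.isBlockPartition
    obtain rfl : k = 1 := le_antisymm hP.length_le (hP.length_pos one_pos)
    obtain rfl : k' = 1 := le_antisymm hP'.length_le (hP'.length_pos one_pos)
    exact ⟨rfl, heq_of_eq (Subsingleton.elim _ _)⟩
  · exact hd.unique hθ (hk.resolve_right (by omega)) hd' hθ' (hk'.resolve_right (by omega))
end

section
/- If π is a permutation that is θ-decomposable for an absolutely irreducible permutation θ with θ ≠ 12 and θ ≠ 21, then the θ-decomposition of π is unique. -/
namespace DecompAux

variable {n k : ℕ} {π : Equiv.Perm (Fin n)} {θ : Equiv.Perm (Fin k)} {b : ℕ → ℕ}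

lemma bd_lt (hb : IsDecomp π θ b) : ∀ {i j : ℕ}, i < j → j ≤ k → b i < b j := by
  intro i j hij hjk
  induction j with
  | zero => omega
  | succ j ih =>
    rcases Nat.lt_succ_iff_lt_or_eq.mp hij with h | h
    · exact lt_trans (ih h (by omega)) (hb.mono j (by omega))
    · subst h; exact hb.mono i (by omega)

lemma bd_le (hb : IsDecomp π θ b) {i j : ℕ} (hij : i ≤ j) (hjk : j ≤ k) : b i ≤ b j := by
  rcases Nat.lt_or_ge i j with h | h
  · exact le_of_lt (bd_lt hb h hjk)
  · have : i = j := by omega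
    subst this; rfl

lemma bd_le_n (hb : IsDecomp π θ b) {i : ℕ} (hik : i ≤ k) : b i ≤ n := by
  rw [← hb.last]; exact bd_le hb hik le_rfl

lemma idx_exists (hb : IsDecomp π θ b) {p : ℕ} (hp : p < n) :
    ∃ i, i < k ∧ b i ≤ p ∧ p < b (i + 1) := by
  classical
  have hk0 : k ≠ 0 := by
    rintro rfl
    have : n = 0 := by rw [← hb.last, hb.zero]
    omega
  have h0 : b 0 ≤ p := by rw [hb.zero]; omega
  set i := Nat.findGreatest (fun i => b i ≤ p) (k - 1) with hi
  have hspec : b i ≤ p := Nat.findGreatest_spec (P := fun i => b i ≤ p) (Nat.zero_le _) h0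
  have hik : i ≤ k - 1 := Nat.findGreatest_le _
  refine ⟨i, by omega, hspec, ?_⟩
  by_cases h : i = k - 1
  · have hik' : i + 1 = k := by omega
    rw [hik', hb.last]; omega
  · have := Nat.findGreatest_is_greatest (show i < i + 1 by omega) (show i + 1 ≤ k - 1 by omega)
    simpa using this

lemma idx_unique (hb : IsDecomp π θ b) {p i j : ℕ} (hik : i < k) (hjk : j < k)
    (h1 : b i ≤ p) (h2 : p < b (i + 1)) (h3 : b j ≤ p) (h4 : p < b (j + 1)) : i = j := by
  by_contra hne
  rcases Nat.lt_or_ge i j with h | h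
  · have : b (i + 1) ≤ b j := bd_le hb (by omega) (by omega)
    omega
  · have : b (j + 1) ≤ b i := bd_le hb (by omega) (by omega)
    omega

noncomputable def LO (hb : IsDecomp π θ b) (i : ℕ) : ℕ :=
  if h : i < k then (hb.interval i h).choose else 0

lemma LO_spec (hb : IsDecomp π θ b) {i : ℕ} (h : i < k) (p : Fin n)
    (h1 : b i ≤ (p : ℕ)) (h2 : (p : ℕ) < b (i + 1)) :
    LO hb i ≤ (π p : ℕ) ∧ (π p : ℕ) < LO hb i + (b (i + 1) - b i) := by
  rw [LO, dif_pos h]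
  exact (hb.interval i h).choose_spec p h1 h2

lemma LO_surj (hb : IsDecomp π θ b) {i : ℕ} (h : i < k) {v : ℕ} (h1 : LO hb i ≤ v)
    (h2 : v < LO hb i + (b (i + 1) - b i)) :
    ∃ p : Fin n, b i ≤ (p : ℕ) ∧ (p : ℕ) < b (i + 1) ∧ (π p : ℕ) = v := by
  classical
  set S : Finset (Fin n) := Finset.univ.filter (fun p => b i ≤ (p : ℕ) ∧ (p : ℕ) < b (i + 1))
    with hS
  have hbn : b (i + 1) ≤ n := bd_le_n hb (by omega)
  have hSval : S.image Fin.val = Finset.Ico (b i) (b (i + 1)) := by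
    ext x
    simp only [hS, Finset.mem_image, Finset.mem_filter, Finset.mem_univ, true_and,
      Finset.mem_Ico]
    constructor
    · rintro ⟨p, hp, rfl⟩; exact hp
    · intro hx; exact ⟨⟨x, lt_of_lt_of_le hx.2 hbn⟩, hx, rfl⟩
  have hcardS : S.card = b (i + 1) - b i := by
    have h := Finset.card_image_of_injective S Fin.val_injective
    rw [hSval, Nat.card_Ico] at h
    omega
  set T := S.image (fun p => (π p : ℕ)) with hT
  have hTcard : T.card = b (i + 1) - b i := by
    rw [hT, Finset.card_image_of_injective _
      (show Function.Injective (fun p : Fin n => (π p : ℕ)) from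
        fun a b hab => π.injective (Fin.val_injective hab)), hcardS]
  have hsub : T ⊆ Finset.Ico (LO hb i) (LO hb i + (b (i + 1) - b i)) := by
    intro v hv
    rw [hT, Finset.mem_image] at hv
    obtain ⟨p, hp, rfl⟩ := hv
    rw [hS, Finset.mem_filter] at hp
    exact Finset.mem_Ico.mpr (LO_spec hb h p hp.2.1 hp.2.2)
  have heq : T = Finset.Ico (LO hb i) (LO hb i + (b (i + 1) - b i)) :=
    Finset.eq_of_subset_of_card_le hsub (by rw [hTcard, Nat.card_Ico]; omega)
  have hv : v ∈ T := by rw [heq]; exact Finset.mem_Ico.mpr ⟨h1, h2⟩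
  rw [hT, Finset.mem_image] at hv
  obtain ⟨p, hp, hpv⟩ := hv
  rw [hS, Finset.mem_filter] at hp
  exact ⟨p, hp.2.1, hp.2.2, hpv⟩

lemma LO_sep (hb : IsDecomp π θ b) {i j : ℕ} (hik : i < k) (hjk : j < k)
    (hij : θ ⟨i, hik⟩ < θ ⟨j, hjk⟩) :
    LO hb i + (b (i + 1) - b i) ≤ LO hb j := by
  have hleni : 1 ≤ b (i + 1) - b i := by have := hb.mono i hik; omega
  have hlenj : 1 ≤ b (j + 1) - b j := by have := hb.mono j hjk; omega
  obtain ⟨p, hp1, hp2, hp3⟩ := LO_surj hb hik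
    (v := LO hb i + (b (i + 1) - b i) - 1) (by omega) (by omega)
  obtain ⟨q, hq1, hq2, hq3⟩ := LO_surj hb hjk (v := LO hb j) (le_refl _) (by omega)
  have h := hb.order ⟨i, hik⟩ ⟨j, hjk⟩ hij p q hp1 hp2 hq1 hq2
  have h2 : (π p : ℕ) < (π q : ℕ) := h
  omega

lemma val_block (hb : IsDecomp π θ b) {p : Fin n} {i m : ℕ} (hik : i < k) (hmk : m < k)
    (h1 : b i ≤ (p : ℕ)) (h2 : (p : ℕ) < b (i + 1))
    (h3 : LO hb m ≤ (π p : ℕ)) (h4 : (π p : ℕ) < LO hb m + (b (m + 1) - b m)) : i = m := by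
  by_contra hne
  have hfne : θ ⟨i, hik⟩ ≠ θ ⟨m, hmk⟩ := fun h => hne (by simpa using θ.injective h)
  have hval := LO_spec hb hik p h1 h2
  rcases lt_or_gt_of_ne hfne with h | h
  · have := LO_sep hb hik hmk h; omega
  · have := LO_sep hb hmk hik h; omega


lemma contained (hθ : AbsIrred θ) (hk2 : k ≠ 2) {b' : ℕ → ℕ}
    (hb : IsDecomp π θ b) (hb' : IsDecomp π θ b')
    {j : ℕ} (hj : j < k) : ∃ i, i < k ∧ b i ≤ b' j ∧ b' (j + 1) ≤ b (i + 1) := by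
  classical
  by_contra hcon
  push_neg at hcon
  -- basic facts
  have hbj_lt_n : b' j < n := by
    have h1 := bd_lt hb' (show j < j + 1 by omega) (by omega)
    have h2 := bd_le_n hb' (show j + 1 ≤ k by omega)
    omega
  have hbj1_le_n : b' (j + 1) ≤ n := bd_le_n hb' (by omega)
  have hbjmono := hb'.mono j hj
  obtain ⟨l, hlk, hl1, hl2⟩ := idx_exists hb hbj_lt_n
  have hcross : b (l + 1) < b' (j + 1) := hcon l hlk hl1
  have hl1k : l + 1 < k := by
    rcases Nat.lt_or_ge (l + 1) k with h | h
    · exact h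
    · have : l + 1 = k := by omega
      rw [this, hb.last] at hcross; omega
  have hq_lt : b' (j + 1) - 1 < n := by omega
  obtain ⟨r, hrk, hr1, hr2⟩ := idx_exists hb hq_lt
  have hlr : l + 1 ≤ r := by
    by_contra h
    have : b (r + 1) ≤ b (l + 1) := bd_le hb (by omega) (by omega)
    omega
  -- F1 : every b-block in [l,r] meets the b'-block j
  have hF1 : ∀ m, l ≤ m → m ≤ r → ∃ q : Fin n,
      b' j ≤ (q : ℕ) ∧ (q : ℕ) < b' (j + 1) ∧ b m ≤ (q : ℕ) ∧ (q : ℕ) < b (m + 1) := by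
    intro m hm1 hm2
    have hmk : m < k := by omega
    have h1 : b m ≤ b r := bd_le hb hm2 (by omega)
    have h2 : b (l + 1) ≤ b (m + 1) := bd_le hb (by omega) (by omega)
    have h3 := hb.mono m hmk
    have hmax1 : b' j ≤ max (b' j) (b m) := le_max_left _ _
    have hmax2 : b m ≤ max (b' j) (b m) := le_max_right _ _
    have hmax3 := max_choice (b' j) (b m)
    refine ⟨⟨max (b' j) (b m), by omega⟩, by simpa using hmax1, ?_, by simpa using hmax2, ?_⟩
    · show max (b' j) (b m) < b' (j + 1); omega
    · show max (b' j) (b m) < b (m + 1); omega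
  -- F2 : convexity of the set of θ-values of blocks l..r
  have hF2 : ∀ m1 m2 m : ℕ, ∀ (h1 : m1 < k) (h2 : m2 < k) (hmk : m < k),
      l ≤ m1 → m1 ≤ r → l ≤ m2 → m2 ≤ r →
      θ ⟨m1, h1⟩ < θ ⟨m, hmk⟩ → θ ⟨m, hmk⟩ < θ ⟨m2, h2⟩ → l ≤ m ∧ m ≤ r := by
    intro m1 m2 m h1 h2 hmk hm1l hm1r hm2l hm2r ho1 ho2
    obtain ⟨q1, hq1a, hq1b, hq1c, hq1d⟩ := hF1 m1 hm1l hm1r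
    obtain ⟨q2, hq2a, hq2b, hq2c, hq2d⟩ := hF1 m2 hm2l hm2r
    have hv1 := LO_spec hb h1 q1 hq1c hq1d
    have hv2 := LO_spec hb h2 q2 hq2c hq2d
    have hv1' := LO_spec hb' hj q1 hq1a hq1b
    have hv2' := LO_spec hb' hj q2 hq2a hq2b
    have hs1 := LO_sep hb h1 hmk ho1
    have hs2 := LO_sep hb hmk h2 ho2
    have hlenm : 1 ≤ b (m + 1) - b m := by have := hb.mono m hmk; omega
    obtain ⟨q, hqa, hqb, hqc⟩ := LO_surj hb' hj (v := LO hb m) (by omega) (by omega)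
    have hqn : (q : ℕ) < n := q.isLt
    obtain ⟨m', hm'k, hm'1, hm'2⟩ := idx_exists hb hqn
    have hmm : m' = m := val_block hb hm'k hmk hm'1 hm'2 (by omega) (by omega)
    subst hmm
    constructor
    · by_contra h
      have : b (m' + 1) ≤ b l := bd_le hb (by omega) (by omega)
      omega
    · by_contra h
      have : b (r + 1) ≤ b m' := bd_le hb (by omega) (by omega)
      omega
  -- the θ-values of blocks l..r form an interval ⇒ [l, r+1) is a block of θ
  set f : ℕ → ℕ := fun m => if h : m < k then ((θ ⟨m, h⟩ : Fin k) : ℕ) else 0 with hf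
  have hfval : ∀ m (h : m < k), f m = ((θ ⟨m, h⟩ : Fin k) : ℕ) := by
    intro m h; simp only [hf, dif_pos h]
  have hfinj : ∀ m m' : ℕ, m < k → m' < k → f m = f m' → m = m' := by
    intro m m' h h' he
    rw [hfval m h, hfval m' h'] at he
    have := θ.injective (Fin.ext he)
    simpa using this
  set T : Finset ℕ := (Finset.Icc l r).image f with hT
  have hTne : T.Nonempty :=
    ⟨f l, Finset.mem_image_of_mem f (Finset.mem_Icc.mpr ⟨le_refl _, by omega⟩)⟩
  have hTk : ∀ t ∈ T, t < k := by
    intro t ht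
    rw [hT, Finset.mem_image] at ht
    obtain ⟨m, hm, rfl⟩ := ht
    rw [Finset.mem_Icc] at hm
    rw [hfval m (by omega)]
    exact (θ _).isLt
  have hcardT : T.card = r + 1 - l := by
    rw [hT, Finset.card_image_of_injOn, Nat.card_Icc]
    intro m hm m' hm' he
    rw [Finset.coe_Icc, Set.mem_Icc] at hm hm'
    exact hfinj m m' (by omega) (by omega) he
  set tmin := T.min' hTne with htmin
  set tmax := T.max' hTne with htmax
  have htmm : tmin ≤ tmax := T.min'_le _ (T.max'_mem hTne)
  have hconv : ∀ t, tmin ≤ t → t ≤ tmax → t ∈ T := by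
    intro t ht1 ht2
    have htk : t < k := lt_of_le_of_lt ht2 (hTk tmax (T.max'_mem hTne))
    obtain ⟨m1, hm1, hfm1⟩ := Finset.mem_image.mp (by rw [← hT]; exact T.min'_mem hTne)
    obtain ⟨m2, hm2, hfm2⟩ := Finset.mem_image.mp (by rw [← hT]; exact T.max'_mem hTne)
    rw [Finset.mem_Icc] at hm1 hm2
    rcases eq_or_lt_of_le ht1 with h | hlt1
    · rw [← h, htmin, ← hfm1, hT]
      exact Finset.mem_image_of_mem f (Finset.mem_Icc.mpr hm1)
    rcases eq_or_lt_of_le ht2 with h | hlt2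
    · rw [h, htmax, ← hfm2, hT]
      exact Finset.mem_image_of_mem f (Finset.mem_Icc.mpr hm2)
    set m : ℕ := ((θ.symm ⟨t, htk⟩ : Fin k) : ℕ) with hm
    have hmk : m < k := (θ.symm _).isLt
    have hθm : θ ⟨m, hmk⟩ = ⟨t, htk⟩ := by
      have he : (⟨m, hmk⟩ : Fin k) = θ.symm ⟨t, htk⟩ := Fin.eta _ _
      rw [he, Equiv.apply_symm_apply]
    have hcc := hF2 m1 m2 m (by omega) (by omega) hmk hm1.1 hm1.2 hm2.1 hm2.2
      (by rw [Fin.lt_def, hθm]; rw [hfval m1 (by omega)] at hfm1; simp only [hfm1]; exact hlt1)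
      (by rw [Fin.lt_def, hθm]; rw [hfval m2 (by omega)] at hfm2; simp only [hfm2]; exact hlt2)
    rw [hT, Finset.mem_image]
    refine ⟨m, Finset.mem_Icc.mpr hcc, ?_⟩
    rw [hfval m hmk, hθm]
  have hsub1 : Finset.Icc tmin tmax ⊆ T := by
    intro t ht; rw [Finset.mem_Icc] at ht; exact hconv t ht.1 ht.2
  have hsub2 : T ⊆ Finset.Icc tmin tmax := by
    intro t ht; exact Finset.mem_Icc.mpr ⟨T.min'_le t ht, T.le_max' t ht⟩
  have hTsize : tmax = tmin + (r - l) := by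
    have c1 := Finset.card_le_card hsub1
    have c2 := Finset.card_le_card hsub2
    rw [Nat.card_Icc, hcardT] at c1 c2
    omega
  -- apply absolute irreducibility
  have hnotblock : ¬ (l + 2 ≤ r + 1 ∧ ProperBlock θ l (r + 1)) := fun h => hθ ⟨l, r + 1, h⟩
  have hlr0 : l = 0 ∧ r + 1 = k := by
    by_contra hc
    apply hnotblock
    refine ⟨by omega, ⟨by omega, by omega, tmin, ?_⟩, hc⟩
    intro p hp1 hp2
    have hpT : f (p : ℕ) ∈ T := by
      rw [hT]; exact Finset.mem_image_of_mem f (Finset.mem_Icc.mpr ⟨hp1, by omega⟩)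
    have h1 : tmin ≤ f (p : ℕ) := T.min'_le _ hpT
    have h2 : f (p : ℕ) ≤ tmax := T.le_max' _ hpT
    have h3 : f (p : ℕ) = ((θ p : Fin k) : ℕ) := by
      rw [hfval (p : ℕ) p.isLt, Fin.eta]
    rw [h3] at h1 h2
    omega
  obtain ⟨rfl, hrk1⟩ := hlr0
  have hk3 : 3 ≤ k := by omega
  have h0k : 0 < k := by omega
  have hk1k : k - 1 < k := by omega
  have hrval : r = k - 1 := by omega
  have hz := hb.zero
  -- every b-block meets the b'-block j
  have hF1' : ∀ m, m < k → ∃ q : Fin n,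
      b' j ≤ (q : ℕ) ∧ (q : ℕ) < b' (j + 1) ∧ b m ≤ (q : ℕ) ∧ (q : ℕ) < b (m + 1) :=
    fun m hm => hF1 m (by omega) (by omega)
  -- extremity-and-sign lemma
  have hF7 : ∀ c j' (hck : c < k) (hj'k : j' < k), j' ≠ j →
      (∀ q : Fin n, b' j' ≤ (q : ℕ) → (q : ℕ) < b' (j' + 1) →
        LO hb c ≤ (π q : ℕ) ∧ (π q : ℕ) < LO hb c + (b (c + 1) - b c)) →
      (((θ ⟨c, hck⟩ : Fin k) : ℕ) = 0 ∧ θ ⟨j', hj'k⟩ < θ ⟨j, hj⟩) ∨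
      (((θ ⟨c, hck⟩ : Fin k) : ℕ) = k - 1 ∧ θ ⟨j, hj⟩ < θ ⟨j', hj'k⟩) := by
    intro c j' hck hj'k hne hval
    have hbj'n : b' j' < n := by
      have ha := bd_lt hb' (show j' < j' + 1 by omega) (by omega)
      have hbb := bd_le_n hb' (show j' + 1 ≤ k by omega)
      omega
    have hq'm := hb'.mono j' hj'k
    set q' : Fin n := ⟨b' j', hbj'n⟩ with hq'
    have hcoe : (q' : ℕ) = b' j' := rfl
    have hv' := hval q' (by omega) (by omega)
    have hv'2 := LO_spec hb' hj'k q' (by omega) (by omega)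
    have hfne : θ ⟨j', hj'k⟩ ≠ θ ⟨j, hj⟩ := fun h => hne (by simpa using θ.injective h)
    have htck : ((θ ⟨c, hck⟩ : Fin k) : ℕ) < k := (θ _).isLt
    rcases lt_or_gt_of_ne hfne with hlt | hgt
    · left
      refine ⟨?_, hlt⟩
      by_contra h0
      set t : ℕ := ((θ ⟨c, hck⟩ : Fin k) : ℕ) - 1 with ht
      have htk : t < k := by omega
      set m0 : ℕ := ((θ.symm ⟨t, htk⟩ : Fin k) : ℕ) with hm0
      have hm0k : m0 < k := (θ.symm _).isLt
      have hθm0 : θ ⟨m0, hm0k⟩ = ⟨t, htk⟩ := by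
        have he : (⟨m0, hm0k⟩ : Fin k) = θ.symm ⟨t, htk⟩ := Fin.eta _ _
        rw [he, Equiv.apply_symm_apply]
      have hvm0 : ((θ ⟨m0, hm0k⟩ : Fin k) : ℕ) = t := by rw [hθm0]
      have ho : θ ⟨m0, hm0k⟩ < θ ⟨c, hck⟩ := by
        rw [Fin.lt_def, hvm0]; omega
      have hs := LO_sep hb hm0k hck ho
      obtain ⟨q0, hq0a, hq0b, hq0c, hq0d⟩ := hF1' m0 hm0k
      have hv0 := LO_spec hb hm0k q0 hq0c hq0d
      have hv0' := LO_spec hb' hj q0 hq0a hq0b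
      have hsep' := LO_sep hb' hj'k hj hlt
      omega
    · right
      refine ⟨?_, hgt⟩
      by_contra h0
      set t : ℕ := ((θ ⟨c, hck⟩ : Fin k) : ℕ) + 1 with ht
      have htk : t < k := by omega
      set m0 : ℕ := ((θ.symm ⟨t, htk⟩ : Fin k) : ℕ) with hm0
      have hm0k : m0 < k := (θ.symm _).isLt
      have hθm0 : θ ⟨m0, hm0k⟩ = ⟨t, htk⟩ := by
        have he : (⟨m0, hm0k⟩ : Fin k) = θ.symm ⟨t, htk⟩ := Fin.eta _ _
        rw [he, Equiv.apply_symm_apply]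
      have hvm0 : ((θ ⟨m0, hm0k⟩ : Fin k) : ℕ) = t := by rw [hθm0]
      have ho : θ ⟨c, hck⟩ < θ ⟨m0, hm0k⟩ := by
        rw [Fin.lt_def, hvm0]; omega
      have hs := LO_sep hb hck hm0k ho
      obtain ⟨q0, hq0a, hq0b, hq0c, hq0d⟩ := hF1' m0 hm0k
      have hv0 := LO_spec hb hm0k q0 hq0c hq0d
      have hv0' := LO_spec hb' hj q0 hq0a hq0b
      have hsep' := LO_sep hb' hj hj'k hgt
      omega
  -- blocks of b' left of j sit inside b-block 0, right of j inside b-block k-1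
  have hL : ∀ j', j' < j → ∀ q : Fin n, b' j' ≤ (q : ℕ) → (q : ℕ) < b' (j' + 1) →
      LO hb 0 ≤ (π q : ℕ) ∧ (π q : ℕ) < LO hb 0 + (b (0 + 1) - b 0) := by
    intro j' hj' q h1 h2
    have h3 : b' (j' + 1) ≤ b' j := bd_le hb' (by omega) (by omega)
    exact LO_spec hb h0k q (by omega) (by omega)
  have hR : ∀ j'', j < j'' → j'' < k → ∀ q : Fin n, b' j'' ≤ (q : ℕ) → (q : ℕ) < b' (j'' + 1) →
      LO hb (k - 1) ≤ (π q : ℕ) ∧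
        (π q : ℕ) < LO hb (k - 1) + (b (k - 1 + 1) - b (k - 1)) := by
    intro j'' h1 h2 q h3 h4
    have h5 : b' (j + 1) ≤ b' j'' := bd_le hb' (by omega) (by omega)
    have h6 : k - 1 + 1 = k := by omega
    have hq : (q : ℕ) < b (k - 1 + 1) := by rw [h6, hb.last]; exact q.isLt
    refine LO_spec hb hk1k q ?_ hq
    rw [← hrval]; omega
  -- uniform sign on the left of j
  have hsignL : j ≠ 0 →
      (((θ ⟨0, h0k⟩ : Fin k) : ℕ) = 0 ∧
        ∀ j' (h : j' < j), θ ⟨j', Nat.lt_trans h hj⟩ < θ ⟨j, hj⟩) ∨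
      (((θ ⟨0, h0k⟩ : Fin k) : ℕ) = k - 1 ∧
        ∀ j' (h : j' < j), θ ⟨j, hj⟩ < θ ⟨j', Nat.lt_trans h hj⟩) := by
    intro hj0
    by_cases h0 : ((θ ⟨0, h0k⟩ : Fin k) : ℕ) = 0
    · left
      refine ⟨h0, fun j' h => ?_⟩
      rcases hF7 0 j' h0k (Nat.lt_trans h hj) (by omega) (hL j' h) with ⟨_, hs⟩ | ⟨hc, _⟩
      · exact hs
      · omega
    · right
      have hax : ∀ j' (h : j' < j), ((θ ⟨0, h0k⟩ : Fin k) : ℕ) = k - 1 ∧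
          θ ⟨j, hj⟩ < θ ⟨j', Nat.lt_trans h hj⟩ := by
        intro j' h
        rcases hF7 0 j' h0k (Nat.lt_trans h hj) (by omega) (hL j' h) with ⟨hc, _⟩ | hs
        · omega
        · exact hs
      exact ⟨(hax 0 (by omega)).1, fun j' h => (hax j' h).2⟩
  -- uniform sign on the right of j
  have hsignR : j ≠ k - 1 →
      (((θ ⟨k - 1, hk1k⟩ : Fin k) : ℕ) = 0 ∧
        ∀ j'' (h1 : j < j'') (h2 : j'' < k), θ ⟨j'', h2⟩ < θ ⟨j, hj⟩) ∨
      (((θ ⟨k - 1, hk1k⟩ : Fin k) : ℕ) = k - 1 ∧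
        ∀ j'' (h1 : j < j'') (h2 : j'' < k), θ ⟨j, hj⟩ < θ ⟨j'', h2⟩) := by
    intro hjk1
    by_cases h0 : ((θ ⟨k - 1, hk1k⟩ : Fin k) : ℕ) = 0
    · left
      refine ⟨h0, fun j'' h1 h2 => ?_⟩
      rcases hF7 (k - 1) j'' hk1k h2 (by omega) (hR j'' h1 h2) with ⟨_, hs⟩ | ⟨hc, _⟩
      · exact hs
      · omega
    · right
      have hax : ∀ j'' (h1 : j < j'') (h2 : j'' < k),
          ((θ ⟨k - 1, hk1k⟩ : Fin k) : ℕ) = k - 1 ∧ θ ⟨j, hj⟩ < θ ⟨j'', h2⟩ := by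
        intro j'' h1 h2
        rcases hF7 (k - 1) j'' hk1k h2 (by omega) (hR j'' h1 h2) with ⟨hc, _⟩ | hs
        · omega
        · exact hs
      exact ⟨(hax (j + 1) (by omega) (by omega)).1, fun j'' h1 h2 => (hax j'' h1 h2).2⟩
  -- helper to produce the final contradiction from a block of θ
  have hblk : ∀ a c lo : ℕ, a + 2 ≤ c → c ≤ k → ¬(a = 0 ∧ c = k) →
      (∀ p : Fin k, a ≤ (p : ℕ) → (p : ℕ) < c →
        lo ≤ ((θ p : Fin k) : ℕ) ∧ ((θ p : Fin k) : ℕ) < lo + (c - a)) → False :=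
    fun a c lo h1 h2 h3 h4 => hθ ⟨a, c, h1, ⟨⟨by omega, h2, lo, h4⟩, h3⟩⟩
  have hjv : ((θ ⟨j, hj⟩ : Fin k) : ℕ) < k := (θ _).isLt
  -- final case analysis
  rcases Nat.eq_zero_or_pos j with hj0 | hjpos
  · subst hj0
    rcases hsignR (by omega) with ⟨_, hs⟩ | ⟨_, hs⟩
    · refine hblk 1 k 0 (by omega) le_rfl (by omega) ?_
      intro p hp1 hp2
      have h := hs p.1 (by omega) p.isLt
      simp only [Fin.eta, Fin.lt_def] at h
      omega
    · refine hblk 1 k 1 (by omega) le_rfl (by omega) ?_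
      intro p hp1 hp2
      have h := hs p.1 (by omega) p.isLt
      simp only [Fin.eta, Fin.lt_def] at h
      have := (θ p).isLt
      omega
  rcases Nat.lt_or_ge j (k - 1) with hjlt | hjge
  swap
  · -- j = k - 1
    have hjeq : j = k - 1 := by omega
    rcases hsignL (by omega) with ⟨_, hs⟩ | ⟨_, hs⟩
    · refine hblk 0 (k - 1) 0 (by omega) (by omega) (by omega) ?_
      intro p hp1 hp2
      have h := hs p.1 (by omega)
      simp only [Fin.eta, Fin.lt_def] at h
      omega
    · refine hblk 0 (k - 1) 1 (by omega) (by omega) (by omega) ?_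
      intro p hp1 hp2
      have h := hs p.1 (by omega)
      simp only [Fin.eta, Fin.lt_def] at h
      have := (θ p).isLt
      omega
  · -- 0 < j < k - 1
    rcases hsignL (by omega) with ⟨hA1, hsA⟩ | ⟨hB1, hsB⟩ <;>
      rcases hsignR (by omega) with ⟨hC1, hsC⟩ | ⟨hD1, hsD⟩
    · -- θ0 = 0 and θ(k-1) = 0 : impossible
      have he : (⟨0, h0k⟩ : Fin k) = ⟨k - 1, hk1k⟩ := θ.injective (Fin.ext (by omega))
      have : (0 : ℕ) = k - 1 := by simpa using he
      omega
    · -- left <, right > : θ j = j, block [0, j+1)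
      have hPH : ((θ ⟨j, hj⟩ : Fin k) : ℕ) ≤ j := by
        by_contra hgt
        set U : Finset ℕ := (Finset.Ico (j + 1) k).image f with hU
        have hUcard : U.card = k - (j + 1) := by
          rw [hU, Finset.card_image_of_injOn, Nat.card_Ico]
          intro m hm m' hm' he
          rw [Finset.coe_Ico, Set.mem_Ico] at hm hm'
          exact hfinj m m' (by omega) (by omega) he
        have hUsub : U ⊆ Finset.Ico (((θ ⟨j, hj⟩ : Fin k) : ℕ) + 1) k := by
          intro t ht
          rw [hU, Finset.mem_image] at ht
          obtain ⟨m, hm, rfl⟩ := ht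
          rw [Finset.mem_Ico] at hm
          have h := hsD m hm.1 hm.2
          rw [Fin.lt_def] at h
          rw [hfval m (by omega)]
          exact Finset.mem_Ico.mpr ⟨by omega, (θ _).isLt⟩
        have hcc := Finset.card_le_card hUsub
        rw [hUcard, Nat.card_Ico] at hcc
        omega
      refine hblk 0 (j + 1) 0 (by omega) (by omega) (by omega) ?_
      intro p hp1 hp2
      rcases Nat.lt_or_ge p.1 j with hpj | hpj
      · have h := hsA p.1 hpj
        simp only [Fin.eta, Fin.lt_def] at h
        omega
      · have hpe : p = ⟨j, hj⟩ := Fin.ext (show (p : ℕ) = j by omega)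
        rw [hpe]
        omega
    · -- left >, right < : θ j = k-1-j, block [0, j+1)
      have hPH : k - 1 - j ≤ ((θ ⟨j, hj⟩ : Fin k) : ℕ) := by
        by_contra hlt2
        set U : Finset ℕ := (Finset.Ico (j + 1) k).image f with hU
        have hUcard : U.card = k - (j + 1) := by
          rw [hU, Finset.card_image_of_injOn, Nat.card_Ico]
          intro m hm m' hm' he
          rw [Finset.coe_Ico, Set.mem_Ico] at hm hm'
          exact hfinj m m' (by omega) (by omega) he
        have hUsub : U ⊆ Finset.Ico 0 ((θ ⟨j, hj⟩ : Fin k) : ℕ) := by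
          intro t ht
          rw [hU, Finset.mem_image] at ht
          obtain ⟨m, hm, rfl⟩ := ht
          rw [Finset.mem_Ico] at hm
          have h := hsC m hm.1 hm.2
          rw [Fin.lt_def] at h
          rw [hfval m (by omega)]
          exact Finset.mem_Ico.mpr ⟨by omega, h⟩
        have hcc := Finset.card_le_card hUsub
        rw [hUcard, Nat.card_Ico] at hcc
        omega
      refine hblk 0 (j + 1) (k - 1 - j) (by omega) (by omega) (by omega) ?_
      intro p hp1 hp2
      rcases Nat.lt_or_ge p.1 j with hpj | hpj
      · have h := hsB p.1 hpj
        simp only [Fin.eta, Fin.lt_def] at h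
        have := (θ p).isLt
        omega
      · have hpe : p = ⟨j, hj⟩ := Fin.ext (show (p : ℕ) = j by omega)
        rw [hpe]
        omega
    · -- θ0 = k-1 and θ(k-1) = k-1 : impossible
      have he : (⟨0, h0k⟩ : Fin k) = ⟨k - 1, hk1k⟩ := θ.injective (Fin.ext (by omega))
      have : (0 : ℕ) = k - 1 := by simpa using he
      omega


end DecompAux

/-- If `π` is `θ`-decomposable for an absolutely irreducible `θ` which is neither
`12` nor `21` (i.e. `θ` does not have length 2), then the `θ`-decomposition of `π`
is unique: any two breakpoint sequences agree. -/
theorem absIrred_decomposition_unique (n k : ℕ) (π : Equiv.Perm (Fin n))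
    (θ : Equiv.Perm (Fin k)) (hθ : AbsIrred θ) (hk : k ≠ 2)
    (b b' : ℕ → ℕ) (hb : IsDecomp π θ b) (hb' : IsDecomp π θ b') :
    ∀ i ≤ k, b i = b' i := by
  classical
  set I : ℕ → ℕ := fun j => if h : j < k then
    (DecompAux.contained hθ hk hb hb' h).choose else 0 with hIdef
  set I' : ℕ → ℕ := fun j => if h : j < k then
    (DecompAux.contained hθ hk hb' hb h).choose else 0 with hIdef'
  have hI : ∀ j (h : j < k), I j < k ∧ b (I j) ≤ b' j ∧ b' (j + 1) ≤ b (I j + 1) := by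
    intro j h
    simp only [hIdef, dif_pos h]
    exact (DecompAux.contained hθ hk hb hb' h).choose_spec
  have hI' : ∀ j (h : j < k), I' j < k ∧ b' (I' j) ≤ b j ∧ b (j + 1) ≤ b' (I' j + 1) := by
    intro j h
    simp only [hIdef', dif_pos h]
    exact (DecompAux.contained hθ hk hb' hb h).choose_spec
  have hcomp : ∀ j (h : j < k), I' (I j) = j := by
    intro j h
    obtain ⟨h1, h2, h3⟩ := hI j h
    obtain ⟨h1', h2', h3'⟩ := hI' (I j) h1
    have hm := hb'.mono j h
    have hmb := hb.mono (I j) h1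
    exact DecompAux.idx_unique (p := b' j) hb' h1' h (by omega) (by omega) (by omega) (by omega)
  have hcomp' : ∀ j (h : j < k), I (I' j) = j := by
    intro j h
    obtain ⟨h1, h2, h3⟩ := hI' j h
    obtain ⟨h1', h2', h3'⟩ := hI (I' j) h1
    have hm := hb.mono j h
    have hmb := hb'.mono (I' j) h1
    exact DecompAux.idx_unique (p := b j) hb h1' h (by omega) (by omega) (by omega) (by omega)
  have hmono : ∀ j1 j2, j1 < j2 → j2 < k → I j1 < I j2 := by
    intro j1 j2 h12 h2k
    obtain ⟨ha1, ha2, ha3⟩ := hI j1 (by omega)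
    obtain ⟨hc1, hc2, hc3⟩ := hI j2 h2k
    rcases Nat.lt_or_ge (I j1) (I j2) with h | h
    · exact h
    exfalso
    rcases Nat.eq_or_lt_of_le h with heq | hlt
    · have e1 := hcomp j1 (by omega)
      have e2 := hcomp j2 h2k
      rw [heq] at e2
      omega
    · have hx : b (I j2 + 1) ≤ b (I j1) := DecompAux.bd_le hb (by omega) (by omega)
      have hy : b' (j1 + 1) ≤ b' j2 := DecompAux.bd_le hb' (by omega) (by omega)
      have hm1 := hb'.mono j1 (by omega)
      have hm2 := hb'.mono j2 h2k
      omega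
  have hmono' : ∀ j1 j2, j1 < j2 → j2 < k → I' j1 < I' j2 := by
    intro j1 j2 h12 h2k
    obtain ⟨ha1, ha2, ha3⟩ := hI' j1 (by omega)
    obtain ⟨hc1, hc2, hc3⟩ := hI' j2 h2k
    rcases Nat.lt_or_ge (I' j1) (I' j2) with h | h
    · exact h
    exfalso
    rcases Nat.eq_or_lt_of_le h with heq | hlt
    · have e1 := hcomp' j1 (by omega)
      have e2 := hcomp' j2 h2k
      rw [heq] at e2
      omega
    · have hx : b' (I' j2 + 1) ≤ b' (I' j1) := DecompAux.bd_le hb' (by omega) (by omega)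
      have hy : b (j1 + 1) ≤ b j2 := DecompAux.bd_le hb (by omega) (by omega)
      have hm1 := hb.mono j1 (by omega)
      have hm2 := hb.mono j2 h2k
      omega
  have hge : ∀ j, j < k → j ≤ I j := by
    intro j
    induction j with
    | zero => intro _; exact Nat.zero_le _
    | succ m ih =>
      intro h
      have h1 := ih (by omega)
      have h2 := hmono m (m + 1) (by omega) h
      omega
  have hge' : ∀ j, j < k → j ≤ I' j := by
    intro j
    induction j with
    | zero => intro _; exact Nat.zero_le _
    | succ m ih =>
      intro h
      have h1 := ih (by omega)
      have h2 := hmono' m (m + 1) (by omega) h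
      omega
  have hIj : ∀ j, j < k → I j = j := by
    intro j h
    have h1 := hge j h
    have h2 := hge' (I j) (hI j h).1
    have h3 := hcomp j h
    omega
  have hblocks : ∀ j, j < k → b j ≤ b' j ∧ b' (j + 1) ≤ b (j + 1) := by
    intro j h
    have hh := hI j h
    rw [hIj j h] at hh
    exact ⟨hh.2.1, hh.2.2⟩
  intro i hik
  rcases Nat.eq_zero_or_pos i with rfl | hpos
  · rw [hb.zero, hb'.zero]
  rcases Nat.eq_or_lt_of_le hik with heq | hlt
  · rw [heq, hb.last, hb'.last]
  · have h1 := (hblocks i hlt).1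
    have h2 := (hblocks (i - 1) (by omega)).2
    have h3 : i - 1 + 1 = i := by omega
    rw [h3] at h2
    omega
end

section
/- If a permutation π of {1,...,n} has two distinct maximal proper consecutive-position blocks with interval value sets that properly overlap, then π is either 12-decomposable or 21-decomposable, and these two cases are mutually exclusive. -/
/-- A maximal proper block: a proper block not contained in a larger proper block. -/
def MaxProperBlock {n : ℕ} (π : Equiv.Perm (Fin n)) (a b : ℕ) : Prop :=
  ProperBlock π a b ∧
    ∀ a' b' : ℕ, ProperBlock π a' b' → a' ≤ a → b ≤ b' → a' = a ∧ b' = b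

/-- `π` is 12-decomposable: some proper prefix of positions carries exactly the
smallest values. -/
def TwelveDec {n : ℕ} (π : Equiv.Perm (Fin n)) : Prop :=
  ∃ m : ℕ, 0 < m ∧ m < n ∧ ∀ p : Fin n, ((p : ℕ) < m ↔ (π p : ℕ) < m)

/-- `π` is 21-decomposable: some proper suffix of positions carries exactly the
smallest values. -/
def TwentyOneDec {n : ℕ} (π : Equiv.Perm (Fin n)) : Prop :=
  ∃ m : ℕ, 0 < m ∧ m < n ∧ ∀ p : Fin n, (m ≤ (p : ℕ) ↔ (π p : ℕ) < n - m)

lemma posval_image {n : ℕ} (a b : ℕ) (hb : b ≤ n) :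
    (Finset.filter (fun p : Fin n => a ≤ (p : ℕ) ∧ (p : ℕ) < b) Finset.univ).image Fin.val
      = Finset.Ico a b := by
  ext x
  simp only [Finset.mem_image, Finset.mem_filter, Finset.mem_univ, true_and, Finset.mem_Ico]
  constructor
  · rintro ⟨p, hp, rfl⟩; exact hp
  · rintro ⟨h1, h2⟩; exact ⟨⟨x, lt_of_lt_of_le h2 hb⟩, ⟨h1, h2⟩, rfl⟩

lemma pos_card {n : ℕ} (a b : ℕ) (hb : b ≤ n) :
    (Finset.filter (fun p : Fin n => a ≤ (p : ℕ) ∧ (p : ℕ) < b) Finset.univ).card = b - a := by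
  rw [← Nat.card_Ico a b, ← posval_image a b hb,
    Finset.card_image_of_injective _ Fin.val_injective]

lemma val_image_card {n : ℕ} (π : Equiv.Perm (Fin n)) (a b : ℕ) (hb : b ≤ n) :
    ((Finset.filter (fun p : Fin n => a ≤ (p : ℕ) ∧ (p : ℕ) < b) Finset.univ).image
      (fun p => (π p : ℕ))).card = b - a := by
  rw [Finset.card_image_of_injective _
    (fun p q hpq => π.injective (Fin.val_injective hpq) :
      Function.Injective fun p : Fin n => (π p : ℕ)), pos_card a b hb]

lemma values_eq {n : ℕ} (π : Equiv.Perm (Fin n)) (a b lo : ℕ) (hb : b ≤ n)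
    (hlo : ∀ p : Fin n, a ≤ (p : ℕ) → (p : ℕ) < b →
      lo ≤ (π p : ℕ) ∧ (π p : ℕ) < lo + (b - a)) :
    (Finset.filter (fun p : Fin n => a ≤ (p : ℕ) ∧ (p : ℕ) < b) Finset.univ).image
      (fun p => (π p : ℕ)) = Finset.Ico lo (lo + (b - a)) := by
  apply Finset.eq_of_subset_of_card_le
  · intro x hx
    simp only [Finset.mem_image, Finset.mem_filter, Finset.mem_univ, true_and] at hx
    obtain ⟨p, hp, rfl⟩ := hx
    simpa [Finset.mem_Ico] using hlo p hp.1 hp.2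
  · rw [val_image_card π a b hb, Nat.card_Ico]; omega

lemma pos_of_val_mem {n : ℕ} (π : Equiv.Perm (Fin n)) (a b lo : ℕ) (hb : b ≤ n)
    (hlo : ∀ p : Fin n, a ≤ (p : ℕ) → (p : ℕ) < b →
      lo ≤ (π p : ℕ) ∧ (π p : ℕ) < lo + (b - a))
    (p : Fin n) (h1 : lo ≤ (π p : ℕ)) (h2 : (π p : ℕ) < lo + (b - a)) :
    a ≤ (p : ℕ) ∧ (p : ℕ) < b := by
  have hmem : (π p : ℕ) ∈ Finset.Ico lo (lo + (b - a)) := Finset.mem_Ico.2 ⟨h1, h2⟩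
  rw [← values_eq π a b lo hb hlo] at hmem
  simp only [Finset.mem_image, Finset.mem_filter, Finset.mem_univ, true_and] at hmem
  obtain ⟨q, hq, hqv⟩ := hmem
  have hqp : q = p := π.injective (Fin.val_injective hqv)
  rwa [hqp] at hq

lemma core_lemma {n : ℕ} (π : Equiv.Perm (Fin n)) (a b a' b' : ℕ)
    (hM : MaxProperBlock π a b) (hB' : IsBlock π a' b')
    (haa : a < a') (hab : a' < b) (hbb : b < b') :
    TwelveDec π ∨ TwentyOneDec π := by
  obtain ⟨⟨⟨hab0, hbn, lo, hlo⟩, _⟩, hmax⟩ := hM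
  obtain ⟨ha'b', hb'n, lo', hlo'⟩ := hB'
  have hsub : (Finset.filter (fun p : Fin n => a' ≤ (p : ℕ) ∧ (p : ℕ) < b) Finset.univ).image
      (fun p => (π p : ℕ)) ⊆
      Finset.Ico (max lo lo') (min (lo + (b - a)) (lo' + (b' - a'))) := by
    intro x hx
    simp only [Finset.mem_image, Finset.mem_filter, Finset.mem_univ, true_and] at hx
    obtain ⟨p, hp, rfl⟩ := hx
    have h1 := hlo p (by omega) hp.2
    have h2 := hlo' p (by omega) (by omega)
    simp only [Finset.mem_Ico]
    omega
  have hcard : b - a' ≤ min (lo + (b - a)) (lo' + (b' - a')) - max lo lo' := by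
    have hc := Finset.card_le_card hsub
    rwa [val_image_card π a' b hbn, Nat.card_Ico] at hc
  have hbound : ∀ p : Fin n, a ≤ (p : ℕ) → (p : ℕ) < b' →
      min lo lo' ≤ (π p : ℕ) ∧ (π p : ℕ) < min lo lo' + (b' - a) := by
    intro p hp1 hp2
    by_cases hc : (p : ℕ) < b
    · have := hlo p hp1 hc; omega
    · have := hlo' p (by omega) hp2; omega
  have hub : IsBlock π a b' := ⟨by omega, hb'n, min lo lo', hbound⟩
  have hnp : ¬ ProperBlock π a b' := by
    intro hP
    have := hmax a b' hP le_rfl (le_of_lt hbb)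
    omega
  have ha0n : a = 0 ∧ b' = n := by
    by_contra hc; exact hnp ⟨hub, hc⟩
  obtain ⟨ha0, hb'n'⟩ := ha0n
  have hn0 : 0 < n := by omega
  have hL0 : min lo lo' = 0 := by
    have hq : (π (π.symm ⟨0, hn0⟩) : ℕ) = 0 := by simp
    have hql := (π.symm ⟨0, hn0⟩).2
    have := hbound (π.symm ⟨0, hn0⟩) (by omega) (by omega)
    omega
  rcases le_total lo lo' with hll | hll
  · left
    refine ⟨b, by omega, by omega, fun p => ⟨fun hp => ?_, fun hp => ?_⟩⟩
    · have := hlo p (by omega) hp; omega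
    · exact (pos_of_val_mem π a b lo hbn hlo p (by omega) (by omega)).2
  · right
    refine ⟨a', by omega, by omega, fun p => ⟨fun hp => ?_, fun hp => ?_⟩⟩
    · have hpl := p.2
      have := hlo' p hp (by omega); omega
    · exact (pos_of_val_mem π a' b' lo' hb'n hlo' p (by omega) (by omega)).1

lemma not_both_dec {n : ℕ} (π : Equiv.Perm (Fin n)) : ¬ (TwelveDec π ∧ TwentyOneDec π) := by
  rintro ⟨⟨m, hm0, hmn, h12⟩, m', hm'0, hm'n, h21⟩
  have hn : 0 < n := by omega
  set q := π.symm ⟨0, hn⟩ with hqdef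
  have hq : (π q : ℕ) = 0 := by simp [hqdef]
  have hq1 : (q : ℕ) < m := (h12 q).2 (by omega)
  have hq2 : m' ≤ (q : ℕ) := (h21 q).2 (by omega)
  set r := π.symm ⟨n - 1, by omega⟩ with hrdef
  have hr : (π r : ℕ) = n - 1 := by simp [hrdef]
  have hr1 : (r : ℕ) < m' := by
    by_contra hc
    push_neg at hc
    have := (h21 r).1 hc
    omega
  have hr2 : (π r : ℕ) < m := (h12 r).1 (by omega)
  omega

/-- If a permutation has two distinct maximal proper blocks which properly overlap
(they intersect but neither contains the other), then it is 12-decomposable or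
21-decomposable, and these two cases are mutually exclusive. -/
theorem overlapping_maximal_blocks (n : ℕ) (π : Equiv.Perm (Fin n))
    (h : ∃ a b a' b' : ℕ, MaxProperBlock π a b ∧ MaxProperBlock π a' b' ∧
      (a ≠ a' ∨ b ≠ b') ∧ a' < b ∧ a < b' ∧
      ¬ (a ≤ a' ∧ b' ≤ b) ∧ ¬ (a' ≤ a ∧ b ≤ b')) :
    (TwelveDec π ∨ TwentyOneDec π) ∧ ¬ (TwelveDec π ∧ TwentyOneDec π) := by
  obtain ⟨a, b, a', b', hM, hM', hne, h1, h2, h3, h4⟩ := h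
  refine ⟨?_, not_both_dec π⟩
  rcases lt_trichotomy a a' with hlt | heq | hgt
  · have hbb : b < b' := by
      by_contra hc; exact h3 ⟨le_of_lt hlt, by omega⟩
    exact core_lemma π a b a' b' hM hM'.1.1 hlt h1 hbb
  · exact absurd heq (by omega)
  · have hbb : b' < b := by
      by_contra hc; exact h4 ⟨le_of_lt hgt, by omega⟩
    exact core_lemma π a' b' a b hM' hM.1.1 hgt h2 hbb
end

section
/- A permutation π of {1,...,n} with n ≥ 2 is absolutely irreducible if and only if it has no set of consecutive positions {i, i+1, ..., j} with 1 ≤ i, j ≤ n, j − i ≥ 1, (i,j) ≠ (1,n), such that {π(i),...,π(j)} is an interval of integers. -/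
lemma block_decomp {n : ℕ} (π : Equiv.Perm (Fin n)) (a b lo : ℕ)
    (ha2 : a + 2 ≤ b) (hb : b ≤ n)
    (hlo : ∀ p : Fin n, a ≤ (p : ℕ) → (p : ℕ) < b →
      lo ≤ (π p : ℕ) ∧ (π p : ℕ) < lo + (b - a)) :
    ∃ σ : Equiv.Perm (Fin (a + 1 + (n - b))), Decomposable π σ := by
  classical
  set k := a + 1 + (n - b) with hk
  set B : ℕ → ℕ := fun t => if t ≤ a then t else b + (t - (a + 1)) with hB
  have hB0 : B 0 = 0 := by simp [hB]
  have hBa : B a = a := by simp [hB]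
  have hBa1 : B (a + 1) = b := by simp only [hB]; rw [if_neg (by omega)]; omega
  have hBk : B k = n := by simp only [hB]; rw [if_neg (by omega)]; omega
  have hstep : ∀ t, B t < B (t + 1) := by
    intro t
    simp only [hB]
    rcases le_or_gt (t + 1) a with h | h
    · rw [if_pos (by omega), if_pos h]; omega
    · rcases le_or_gt t a with h2 | h2
      · rw [if_pos h2, if_neg (by omega)]; omega
      · rw [if_neg (by omega), if_neg (by omega)]; omega
  have hBmono : StrictMono B := strictMono_nat_of_lt_succ hstep
  have hBlt : ∀ i, i < k → B i < n := by
    intro i hi; have := hBmono hi; omega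
  have hBle : ∀ i, i < k → B (i + 1) ≤ n := by
    intro i hi
    have := hBmono.monotone (show i + 1 ≤ k by omega); omega
  have hsing : ∀ i, i ≠ a → B (i + 1) = B i + 1 := by
    intro i hia
    simp only [hB]
    rcases lt_or_gt_of_ne hia with h | h
    · rw [if_pos (by omega), if_pos (by omega)]
    · rw [if_neg (by omega), if_neg (by omega)]; omega
  set v : Fin k → ℕ :=
    fun i => if (i : ℕ) = a then lo else (π ⟨B i, hBlt i i.isLt⟩ : ℕ) with hv
  -- each position in block i has value in [v i, v i + len i)
  have hval : ∀ i : Fin k, ∀ p : Fin n, B i ≤ (p : ℕ) → (p : ℕ) < B ((i : ℕ) + 1) →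
      v i ≤ (π p : ℕ) ∧ (π p : ℕ) < v i + (B ((i : ℕ) + 1) - B i) := by
    intro i p hp1 hp2
    rcases eq_or_ne (i : ℕ) a with hia | hia
    · rw [hia, hBa] at hp1
      rw [hia, hBa1] at hp2
      have h := hlo p hp1 hp2
      simp only [hv, if_pos hia]
      rw [hia, hBa, hBa1]
      exact h
    · have hs := hsing (i : ℕ) hia
      have hpB : (p : ℕ) = B i := by omega
      have hpe : p = ⟨B (i : ℕ), hBlt (i : ℕ) i.isLt⟩ := Fin.ext hpB
      simp only [hv, if_neg hia]
      rw [hs, hpe]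
      omega
  -- every value in [v i, v i + len i) is attained in block i
  have hattain : ∀ i : Fin k, ∀ w, v i ≤ w → w < v i + (B ((i : ℕ) + 1) - B i) →
      ∃ p : Fin n, B i ≤ (p : ℕ) ∧ (p : ℕ) < B ((i : ℕ) + 1) ∧ (π p : ℕ) = w := by
    intro i w hw1 hw2
    set f : ℕ → ℕ := fun t => if h : t < n then (π ⟨t, h⟩ : ℕ) else 0 with hf
    have hle : B ((i : ℕ) + 1) ≤ n := hBle i i.isLt
    have hinj : Set.InjOn f (Finset.Ico (B (i : ℕ)) (B ((i : ℕ) + 1))) := by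
      intro s hs t ht hst
      simp only [Finset.coe_Ico, Set.mem_Ico] at hs ht
      have hsn : s < n := lt_of_lt_of_le hs.2 hle
      have htn : t < n := lt_of_lt_of_le ht.2 hle
      simp only [hf, dif_pos hsn, dif_pos htn] at hst
      have h2 := π.injective (Fin.val_injective hst)
      exact congrArg Fin.val h2
    have hcard : ((Finset.Ico (B (i : ℕ)) (B ((i : ℕ) + 1))).image f).card
        = B ((i : ℕ) + 1) - B (i : ℕ) := by
      rw [Finset.card_image_of_injOn hinj, Nat.card_Ico]
    have hsub : (Finset.Ico (B (i : ℕ)) (B ((i : ℕ) + 1))).image f ⊆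
        Finset.Ico (v i) (v i + (B ((i : ℕ) + 1) - B (i : ℕ))) := by
      intro w hw
      simp only [Finset.mem_image, Finset.mem_Ico] at hw ⊢
      obtain ⟨t, ht, rfl⟩ := hw
      have htn : t < n := lt_of_lt_of_le ht.2 hle
      have h := hval i ⟨t, htn⟩ ht.1 ht.2
      simpa [hf, dif_pos htn] using h
    have heq := Finset.eq_of_subset_of_card_le hsub
      (by rw [hcard, Nat.card_Ico]; omega)
    have hwmem : w ∈ (Finset.Ico (B (i : ℕ)) (B ((i : ℕ) + 1))).image f := by
      rw [heq]; exact Finset.mem_Ico.mpr ⟨hw1, hw2⟩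
    simp only [Finset.mem_image, Finset.mem_Ico] at hwmem
    obtain ⟨t, ht, hft⟩ := hwmem
    have htn : t < n := lt_of_lt_of_le ht.2 hle
    refine ⟨⟨t, htn⟩, ht.1, ht.2, ?_⟩
    simpa [hf, dif_pos htn] using hft
  -- distinct blocks are disjoint
  have hdisj : ∀ i j : Fin k, ∀ p : Fin n,
      B (i : ℕ) ≤ (p : ℕ) → (p : ℕ) < B ((i : ℕ) + 1) →
      B (j : ℕ) ≤ (p : ℕ) → (p : ℕ) < B ((j : ℕ) + 1) → i = j := by
    intro i j p hp1 hp2 hp3 hp4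
    rcases lt_trichotomy (i : ℕ) (j : ℕ) with h | h | h
    · have := hBmono.monotone (show (i : ℕ) + 1 ≤ (j : ℕ) by omega); omega
    · exact Fin.ext h
    · have := hBmono.monotone (show (j : ℕ) + 1 ≤ (i : ℕ) by omega); omega
  -- ordering of value intervals
  have hord : ∀ i j : Fin k, v i < v j →
      v i + (B ((i : ℕ) + 1) - B (i : ℕ)) ≤ v j := by
    intro i j hij
    by_contra h
    push_neg at h
    obtain ⟨p, hp1, hp2, hp3⟩ := hattain i (v j) hij.le h
    obtain ⟨q, hq1, hq2, hq3⟩ := hattain j (v j) le_rfl (by have := hstep (j : ℕ); omega)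
    have hpq : p = q := π.injective (Fin.val_injective (hp3.trans hq3.symm))
    subst hpq
    have := hdisj i j p hp1 hp2 hq1 hq2
    subst this
    exact lt_irrefl _ hij
  have hvinj : Function.Injective v := by
    intro i j hij
    obtain ⟨p, hp1, hp2, hp3⟩ := hattain i (v j) hij.le
      (by have := hstep (i : ℕ); omega)
    obtain ⟨q, hq1, hq2, hq3⟩ := hattain j (v j) le_rfl (by have := hstep (j : ℕ); omega)
    have hpq : p = q := π.injective (Fin.val_injective (hp3.trans hq3.symm))
    subst hpq
    exact hdisj i j p hp1 hp2 hq1 hq2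
  have hsm : StrictMono (v ∘ Tuple.sort v) :=
    (Tuple.monotone_sort v).strictMono_of_injective (hvinj.comp (Equiv.injective _))
  refine ⟨(Tuple.sort v)⁻¹, B, hB0, hBk, fun i _ => hstep i, ?_, ?_⟩
  · intro i hi
    exact ⟨v ⟨i, hi⟩, fun p hp1 hp2 => hval ⟨i, hi⟩ p hp1 hp2⟩
  · intro i j hθ p q hp1 hp2 hq1 hq2
    have hvij : v i < v j := by
      have := hsm hθ
      simpa using this
    have h1 := hval i p hp1 hp2
    have h2 := hval j q hq1 hq2
    have h3 := hord i j hvij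
    exact Fin.lt_def.mpr (by omega)

/-- A permutation of length `n ≥ 2` is absolutely irreducible in the sense of
`σ`-decomposability (every decomposition by a permutation `σ` of length at least 2
forces `σ` to be `π` itself) if and only if it has no set of at least two and fewer
than `n` consecutive positions whose values form an interval of integers. -/
theorem absIrred_iff_no_proper_interval_block (n : ℕ) (hn : 2 ≤ n)
    (π : Equiv.Perm (Fin n)) :
    (∀ (m : ℕ) (σ : Equiv.Perm (Fin m)), 2 ≤ m → Decomposable π σ →
        m = n ∧ HEq σ π) ↔
      ¬ ∃ a b : ℕ, a + 2 ≤ b ∧ b ≤ n ∧ ¬ (a = 0 ∧ b = n) ∧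
        ∃ lo : ℕ, ∀ p : Fin n, a ≤ (p : ℕ) → (p : ℕ) < b →
          lo ≤ (π p : ℕ) ∧ (π p : ℕ) < lo + (b - a) := by
  constructor
  · intro hL
    rintro ⟨a, b, ha2, hb, hne, lo, hlo⟩
    obtain ⟨σ, hd⟩ := block_decomp π a b lo ha2 hb hlo
    have hne' : a ≠ 0 ∨ b ≠ n := by tauto
    have hk2 : 2 ≤ a + 1 + (n - b) := by omega
    have := (hL _ σ hk2 hd).1
    omega
  · rintro hR m σ hm ⟨B, hd⟩
    have key : ∀ t, t ≤ m → ∀ s, s < t → B s < B t := by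
      intro t
      induction t with
      | zero => intro _ s hs; omega
      | succ t ih =>
        intro ht s hs
        have hstep := hd.mono t (by omega)
        rcases Nat.lt_or_ge s t with h | h
        · exact lt_trans (ih (by omega) s h) hstep
        · have hst : s = t := by omega
          subst hst; exact hstep
    have hBub : ∀ t, t ≤ m → B t ≤ n := by
      intro t ht
      rcases eq_or_lt_of_le ht with h | h
      · subst h; exact le_of_eq hd.last
      · have := key m le_rfl t h
        have := hd.last
        omega
    have hsing : ∀ i, i < m → B (i + 1) = B i + 1 := by
      intro i hi
      by_contra hcon
      have h2 : B i + 2 ≤ B (i + 1) := by have := hd.mono i hi; omega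
      obtain ⟨lo, hlo⟩ := hd.interval i hi
      apply hR
      refine ⟨B i, B (i + 1), h2, hBub (i + 1) hi, ?_, lo, hlo⟩
      rintro ⟨h0, hn'⟩
      have hz := hd.zero
      have hl := hd.last
      have hi0 : i = 0 := by
        by_contra h
        have := key i (by omega) 0 (by omega)
        omega
      have him : i + 1 = m := by
        by_contra h
        have := key m le_rfl (i + 1) (by omega)
        omega
      omega
    have hBt : ∀ t, t ≤ m → B t = t := by
      intro t
      induction t with
      | zero => intro _; exact hd.zero
      | succ t ih => intro ht; rw [hsing t (by omega), ih (by omega)]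
    have hmn : m = n := by
      have h1 := hBt m le_rfl
      have h2 := hd.last
      omega
    subst hmn
    refine ⟨rfl, heq_of_eq ?_⟩
    have key2 : ∀ i j : Fin m, σ i < σ j → π i < π j := by
      intro i j hij
      exact hd.order i j hij i j
        (le_of_eq (hBt i i.isLt.le))
        (by rw [hBt ((i : ℕ) + 1) i.isLt]; omega)
        (le_of_eq (hBt j j.isLt.le))
        (by rw [hBt ((j : ℕ) + 1) j.isLt]; omega)
    have hsm : StrictMono (fun x : Fin m => π (σ.symm x)) := by
      intro x y hxy
      exact key2 _ _ (by simpa using hxy)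
    have hrange : Set.range (fun x : Fin m => π (σ.symm x))
        = Set.range (id : Fin m → Fin m) := by
      rw [Set.range_id]
      exact Set.range_eq_univ.mpr (fun y => ⟨σ (π.symm y), by simp⟩)
    haveI : WellFoundedLT (Fin m) := inferInstance
    have hid : (fun x : Fin m => π (σ.symm x)) = (id : Fin m → Fin m) :=
      (hsm.range_inj strictMono_id).1 hrange
    apply Equiv.ext
    intro i
    have h := congrFun hid (σ i)
    simpa using h.symm
end
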